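/- arXiv:1612.02210 — 6 statements merged into one kernel-verified Lean document; each statement's English description precedes it below -/
import Mathlib

section
/- Let A be an m-by-n real matrix with m, n ≥ 1 and let r ≥ 1. If every contiguous minor of A of size at most r is positive, then A is totally positive of order r (TP_r). -/
/-- `A` is totally nonnegative of order `r`: every minor of size at most `r` is nonnegative. -/
def IsTNr {m n : ℕ} (A : Matrix (Fin m) (Fin n) ℝ) (r : ℕ) : Prop :=
  ∀ (k : ℕ), k ≤ r → ∀ (f : Fin k → Fin m) (g : Fin k → Fin n),
    StrictMono f → StrictMono g → 0 ≤ (A.submatrix f g).det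

/-- `A` is totally positive of order `r`: every minor of size at most `r` is positive. -/
def IsTPr {m n : ℕ} (A : Matrix (Fin m) (Fin n) ℝ) (r : ℕ) : Prop :=
  ∀ (k : ℕ), k ≤ r → ∀ (f : Fin k → Fin m) (g : Fin k → Fin n),
    StrictMono f → StrictMono g → 0 < (A.submatrix f g).det

/-- The contiguous `k`-by-`k` submatrix of `A` with rows `a, a+1, …, a+k-1`
and columns `b, b+1, …, b+k-1`. -/
def ctgSub {m n : ℕ} (A : Matrix (Fin m) (Fin n) ℝ) (k a b : ℕ)
    (ha : a + k ≤ m) (hb : b + k ≤ n) : Matrix (Fin k) (Fin k) ℝ :=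
  Matrix.of fun i j => A ⟨a + i.1, by omega⟩ ⟨b + j.1, by omega⟩

/-- `A` is a Hankel matrix: the entry `A i j` depends only on `i + j`. -/
def IsHankel {m n : ℕ} (A : Matrix (Fin m) (Fin n) ℝ) : Prop :=
  ∀ (i i' : Fin m) (j j' : Fin n), i.1 + j.1 = i'.1 + j'.1 → A i j = A i' j'

/-- The Hadamard (entrywise) power `A^{∘t}` with real exponent `t` (via `Real.rpow`). -/
noncomputable def hadPow {m n : ℕ} (A : Matrix (Fin m) (Fin n) ℝ) (t : ℝ) :
    Matrix (Fin m) (Fin n) ℝ :=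
  Matrix.of fun i j => (A i j) ^ t

/-!
Induction on the order. Suppose every minor of order `p` is positive, and take rows `I` and columns
`J` of size `p + 1` with a gap in `J`. Inserting a missing column inside the gap gives columns
`c₀ < ⋯ < c_{p+1}`, with `J` all of them but an interior `c_s`. The three-term Plücker relation
`Δ_I(ĉ_s) Δ_{I'}(ĉ₀, ĉ_{p+1}) = Δ_I(ĉ₀) Δ_{I'}(ĉ_s, ĉ_{p+1}) + Δ_I(ĉ_{p+1}) Δ_{I'}(ĉ₀, ĉ_s)`,
with `I'` the set `I` without its first row, writes `det A[I, J]` through positive minors of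
order `p` and two minors of order `p + 1` whose columns span a shorter interval. Induction on that
span reduces to contiguous columns, and the same argument applied to `Aᵀ` reduces further to
contiguous rows.
-/

open Matrix

namespace Matrix

variable {R : Type*} [CommRing R]

theorem det_mul_det_eq_sum_det_updateRow {N : Type*} [Fintype N] [DecidableEq N]
    (V W : Matrix N N R) (i : N) :
    V.det * W.det = ∑ t, (W.updateRow t (V i)).det * (V.updateRow i (W t)).det := by
  have hcramer : ∑ t, (W.updateRow t (V i)).det • W t = W.det • V i := by
    have := mulVec_cramer Wᵀ (V i)
    rw [mulVec_transpose, vecMul_eq_sum, det_transpose] at this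
    simpa only [cramer_transpose_apply] using this
  calc V.det * W.det = (V.updateRow i (W.det • V i)).det := by
        rw [det_updateRow_smul, updateRow_eq_self, mul_comm]
    _ = ∑ t, (W.updateRow t (V i)).det * (V.updateRow i (W t)).det := by
        simp only [← hcramer, ← cramer_transpose_apply, map_sum, map_smul, Finset.sum_apply,
          Pi.smul_apply, smul_eq_mul]

theorem det_eq_of_row_eq_single {q : ℕ} (M : Matrix (Fin (q + 1)) (Fin (q + 1)) R)
    (i j : Fin (q + 1)) (h : M i = Pi.single j 1) :
    M.det = (-1) ^ (i + j : ℕ) * (M.submatrix i.succAbove j.succAbove).det := by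
  rw [← adjugate_fin_succ_eq_det_submatrix, adjugate_apply, ← h, updateRow_eq_self]

theorem det_submatrix_succAbove_mul_det_eq_add {p : ℕ} (B : Matrix (Fin (p + 1)) (Fin (p + 2)) R)
    {s : Fin (p + 2)} (hs0 : s ≠ 0) (hsl : s ≠ Fin.last (p + 1)) :
    (B.submatrix id s.succAbove).det * (B.submatrix Fin.succ (Fin.castSucc ∘ Fin.succ)).det
      = (B.submatrix id Fin.succ).det * (B.submatrix Fin.succ (s.succAbove ∘ Fin.castSucc)).det +
        (B.submatrix id Fin.castSucc).det *
          (B.submatrix Fin.succ (s.succAbove ∘ Fin.succ)).det := by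
  -- Only three terms of the exchange identity for these bordered matrices survive.
  set V : Matrix (Fin (p + 2)) (Fin (p + 2)) R :=
    of (Fin.cons (Pi.single 0 1) (Fin.snoc (fun a => B a.succ) (Pi.single (Fin.last (p + 1)) 1)))
  set W : Matrix (Fin (p + 2)) (Fin (p + 2)) R := of (Fin.cons (Pi.single s 1) B)
  have hV : V.det = (B.submatrix Fin.succ (Fin.castSucc ∘ Fin.succ)).det := by
    rw [det_eq_of_row_eq_single V 0 0 rfl,
      det_eq_of_row_eq_single _ (Fin.last p) (Fin.last p) (by ext; simp [V, Pi.single_apply])]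
    simp only [Fin.val_zero, Fin.val_last, Even.add_self, Even.neg_pow, one_pow, one_mul,
      Fin.succAbove_zero, Fin.succAbove_last, submatrix_submatrix]
    congr 1
    ext a b
    simp [V]
  have hW : W.det = (-1) ^ (s : ℕ) * (B.submatrix id s.succAbove).det := by
    rw [det_eq_of_row_eq_single W 0 s rfl, Fin.val_zero, zero_add]
    rfl
  have hW0 : (W.updateRow 0 (Pi.single 0 1)).det = (B.submatrix id Fin.succ).det := by
    rw [det_eq_of_row_eq_single _ 0 0 (updateRow_self ..), Fin.val_zero, pow_zero, one_mul]
    rfl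
  have hV0 : (V.updateRow 0 (Pi.single s 1)).det
      = (-1) ^ (s : ℕ) * (B.submatrix Fin.succ (s.succAbove ∘ Fin.castSucc)).det := by
    rw [det_eq_of_row_eq_single _ 0 s (updateRow_self ..),
      det_eq_of_row_eq_single _ (Fin.last p) (Fin.last p) (by
        ext
        simp [V, Pi.single_apply, Fin.succAbove_ne_last_last hsl,
          ← Fin.succAbove_right_inj (p := s)])]
    simp only [Fin.val_zero, Fin.val_last, Even.add_self, Even.neg_pow, one_pow, one_mul,
      Fin.succAbove_zero, Fin.succAbove_last, submatrix_submatrix, zero_add]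
    congr 2
    ext a b
    simp [V, updateRow_apply]
  have hW1 : (W.updateRow 1 (Pi.single 0 1)).det
      = (-1) ^ (s : ℕ) * (B.submatrix Fin.succ (s.succAbove ∘ Fin.succ)).det := by
    rw [det_eq_of_row_eq_single _ 0 s (updateRow_ne zero_ne_one),
      det_eq_of_row_eq_single _ 0 0 (by
        ext
        simp [W, Pi.single_apply, Fin.succAbove_ne_zero_zero hs0,
          ← Fin.succAbove_right_inj (p := s)])]
    simp only [Fin.val_zero, pow_zero, one_mul, Fin.succAbove_zero, submatrix_submatrix, zero_add]
    rfl
  have hV1 : (V.updateRow 0 (B 0)).det = (B.submatrix id Fin.castSucc).det := by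
    rw [det_eq_of_row_eq_single _ (Fin.last (p + 1)) (Fin.last (p + 1)) (by ext; simp [V]),
      Even.neg_pow ⟨_, rfl⟩, one_pow, one_mul, Fin.succAbove_last]
    congr 1
    ext a b
    cases a using Fin.cases <;> simp [V, updateRow_apply]
  have hV_succ : ∀ a : Fin p, (V.updateRow 0 (B a.succ)).det = 0 := fun a =>
    det_zero_of_row_eq (Fin.succ_ne_zero a.castSucc).symm (by ext; simp [V])
  have hexch := det_mul_det_eq_sum_det_updateRow V W 0
  simp only [Fin.sum_univ_succ, show V 0 = Pi.single 0 1 from rfl,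
    show W 0 = Pi.single s 1 from rfl, show ∀ a, W a.succ = B a from fun _ => rfl,
    Fin.succ_zero_eq_one, hV, hW, hW0, hV0, hW1, hV1,
    hV_succ, mul_zero, Finset.sum_const_zero, add_zero] at hexch
  refine ((isUnit_neg_one (α := R)).pow s).mul_left_cancel ?_
  linear_combination hexch

end Matrix

-- For strictly monotone `g` this says that `g` takes consecutive values.
def IsContiguous {p N : ℕ} (g : Fin (p + 1) → Fin N) : Prop :=
  (g (Fin.last p) : ℕ) ≤ g 0 + p

namespace StrictMono

variable {N : ℕ}

theorem val_add_le_val_add {k : ℕ} {g : Fin k → Fin N} (hg : StrictMono g) {i j : Fin k}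
    (hij : i ≤ j) : (g i : ℕ) + j ≤ g j + i := by
  have hcard : (Finset.Icc i j).card ≤ (Finset.Icc (g i) (g j)).card :=
    Finset.card_le_card_of_injOn g
      (fun x hx => by
        simp only [Finset.coe_Icc, Set.mem_Icc] at hx ⊢
        exact ⟨hg.monotone hx.1, hg.monotone hx.2⟩)
      hg.injective.injOn
  simp only [Fin.card_Icc] at hcard
  have := hg.monotone hij
  rw [Fin.le_def] at hij this
  omega

variable {p : ℕ} {g : Fin (p + 1) → Fin N}

theorem val_eq_val_zero_add (hg : StrictMono g) (hctg : IsContiguous g) (i : Fin (p + 1)) :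
    (g i : ℕ) = g 0 + i := by
  have h₁ := hg.val_add_le_val_add (Fin.zero_le i)
  have h₂ := hg.val_add_le_val_add (Fin.le_last i)
  simp only [IsContiguous, Fin.val_zero, Fin.val_last] at hctg h₁ h₂
  omega

theorem exists_interior_extension (hg : StrictMono g) (hctg : ¬IsContiguous g) :
    ∃ (c : Fin (p + 2) → Fin N) (s : Fin (p + 2)),
      StrictMono c ∧ s ≠ 0 ∧ s ≠ Fin.last (p + 1) ∧ c ∘ s.succAbove = g := by
  obtain ⟨t, ht⟩ : ∃ t : Fin p, (g t.castSucc : ℕ) + 1 < g t.succ := by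
    by_contra! hstep
    refine hctg ?_
    have hle : ∀ i : Fin (p + 1), (g i : ℕ) ≤ g 0 + i := by
      intro i
      induction i using Fin.induction with
      | zero => simp
      | succ t ih =>
        have := hstep t
        simp only [Fin.val_succ, Fin.val_castSucc] at ih ⊢
        omega
    simpa [IsContiguous] using hle (Fin.last p)
  refine ⟨Fin.insertNth t.castSucc.succ ⟨g t.castSucc + 1, by omega⟩ g, t.castSucc.succ,
    Fin.strictMono_insertNth hg t _ (Fin.lt_def.mpr (Nat.lt_succ_self _)) (Fin.lt_def.mpr ht),
    Fin.succ_ne_zero _, fun h => ?_, ?_⟩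
  · have := congrArg Fin.val h
    simp only [Fin.val_succ, Fin.val_castSucc, Fin.val_last] at this
    omega
  · funext i
    simp [Fin.insertNth_apply_succAbove]

end StrictMono

theorem Matrix.det_submatrix_transpose {R : Type*} [CommRing R] {m n k : ℕ}
    (A : Matrix (Fin m) (Fin n) R) (f : Fin k → Fin m) (g : Fin k → Fin n) :
    (Aᵀ.submatrix g f).det = (A.submatrix f g).det := by
  rw [← transpose_submatrix, det_transpose]

section TotalPositivity

variable {R : Type*} [CommRing R] [LinearOrder R] {m n : ℕ}

def MinorsPos (A : Matrix (Fin m) (Fin n) R) (k : ℕ) : Prop :=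
  ∀ (f : Fin k → Fin m) (g : Fin k → Fin n), StrictMono f → StrictMono g →
    0 < (A.submatrix f g).det

namespace MinorsPos

variable {A : Matrix (Fin m) (Fin n) R} {p : ℕ}

theorem transpose {k : ℕ} (hA : MinorsPos A k) : MinorsPos Aᵀ k := fun f g hf hg => by
  rw [det_submatrix_transpose]
  exact hA g f hg hf

variable [IsStrictOrderedRing R]

theorem det_submatrix_succAbove_pos (hA : MinorsPos A p) {f : Fin (p + 1) → Fin m}
    {c : Fin (p + 2) → Fin n} (hf : StrictMono f) (hc : StrictMono c) {s : Fin (p + 2)}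
    (hs0 : s ≠ 0) (hsl : s ≠ Fin.last (p + 1))
    (hsucc : 0 < (A.submatrix f (c ∘ Fin.succ)).det)
    (hcastSucc : 0 < (A.submatrix f (c ∘ Fin.castSucc)).det) :
    0 < (A.submatrix f (c ∘ s.succAbove)).det := by
  have key := det_submatrix_succAbove_mul_det_eq_add (A.submatrix f c) hs0 hsl
  simp only [submatrix_submatrix, Function.comp_id] at key
  have hsA : StrictMono s.succAbove := Fin.strictMono_succAbove s
  have hfs : StrictMono (f ∘ Fin.succ) := hf.comp Fin.strictMono_succ
  have hmid := hA _ _ hfs (hc.comp (Fin.strictMono_castSucc.comp Fin.strictMono_succ))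
  have hl := hA _ _ hfs (hc.comp (hsA.comp Fin.strictMono_castSucc))
  have hr := hA _ _ hfs (hc.comp (hsA.comp Fin.strictMono_succ))
  refine pos_of_mul_pos_left ?_ hmid.le
  rw [key]
  positivity

theorem det_submatrix_pos_of_contiguous (hA : MinorsPos A p) {f : Fin (p + 1) → Fin m}
    (hf : StrictMono f)
    (hctg : ∀ g : Fin (p + 1) → Fin n, StrictMono g → IsContiguous g → 0 < (A.submatrix f g).det)
    {g : Fin (p + 1) → Fin n} (hg : StrictMono g) : 0 < (A.submatrix f g).det := by
  induction hd : (g (Fin.last p) : ℕ) - g 0 using Nat.strong_induction_on generalizing g with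
  | _ d ih =>
  by_cases hgc : IsContiguous g
  · exact hctg g hg hgc
  obtain ⟨c, s, hc, hs0, hsl, rfl⟩ := hg.exists_interior_extension hgc
  have hc0 : c (s.succAbove 0) = c 0 := by rw [Fin.succAbove_ne_zero_zero hs0]
  have hcl : c (s.succAbove (Fin.last p)) = c (Fin.last (p + 1)) := by
    rw [Fin.succAbove_ne_last_last hsl]
  have hfirst : c 0 < c (Fin.succ 0) := hc (Fin.succ_pos 0)
  have hlast : c (Fin.last p).castSucc < c (Fin.last (p + 1)) := hc (Fin.castSucc_lt_last _)
  rw [Fin.lt_def] at hfirst hlast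
  simp only [IsContiguous, Function.comp_apply, hc0, hcl] at hd hgc
  refine hA.det_submatrix_succAbove_pos hf hc hs0 hsl ?_ ?_
  · refine ih _ ?_ (hc.comp Fin.strictMono_succ) rfl
    change (c (Fin.last (p + 1)) : ℕ) - c (Fin.succ 0) < d
    omega
  · refine ih _ ?_ (hc.comp Fin.strictMono_castSucc) rfl
    change (c (Fin.last p).castSucc : ℕ) - c 0 < d
    omega

theorem succ (hA : MinorsPos A p)
    (hctg : ∀ (f : Fin (p + 1) → Fin m) (g : Fin (p + 1) → Fin n), StrictMono f → StrictMono g →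
      IsContiguous f → IsContiguous g → 0 < (A.submatrix f g).det) :
    MinorsPos A (p + 1) := by
  have hctg_cols : ∀ g : Fin (p + 1) → Fin n, StrictMono g → IsContiguous g →
      ∀ f : Fin (p + 1) → Fin m, StrictMono f → 0 < (A.submatrix f g).det := by
    intro g hg hgc f hf
    rw [← det_submatrix_transpose]
    refine hA.transpose.det_submatrix_pos_of_contiguous hg (fun f' hf' hfc => ?_) hf
    rw [det_submatrix_transpose]
    exact hctg f' g hf' hg hfc hgc
  exact fun f g hf hg =>
    hA.det_submatrix_pos_of_contiguous hf (fun g' hg' hgc => hctg_cols g' hg' hgc f hf) hg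

end MinorsPos

end TotalPositivity

theorem exists_submatrix_eq_ctgSub {m n p : ℕ} (A : Matrix (Fin m) (Fin n) ℝ)
    {f : Fin (p + 1) → Fin m} {g : Fin (p + 1) → Fin n} (hf : StrictMono f) (hg : StrictMono g)
    (hfc : IsContiguous f) (hgc : IsContiguous g) :
    ∃ (ha : (f 0 : ℕ) + (p + 1) ≤ m) (hb : (g 0 : ℕ) + (p + 1) ≤ n),
      A.submatrix f g = ctgSub A (p + 1) (f 0) (g 0) ha hb := by
  have hfi := hf.val_eq_val_zero_add hfc
  have hgi := hg.val_eq_val_zero_add hgc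
  have hfl := hfi (Fin.last p)
  have hgl := hgi (Fin.last p)
  simp only [Fin.val_last] at hfl hgl
  refine ⟨by omega, by omega, ?_⟩
  ext i j
  simp only [submatrix_apply, ctgSub, of_apply]
  congr 1 <;> ext
  exacts [hfi i, hgi j]

theorem contiguous_minors_pos_imp_TPr_general {m n : ℕ}
    (r : ℕ) (A : Matrix (Fin m) (Fin n) ℝ)
    (h : ∀ (k a b : ℕ) (ha : a + k ≤ m) (hb : b + k ≤ n),
      k ≤ r → 0 < (ctgSub A k a b ha hb).det) :
    IsTPr A r := by
  intro k hk
  induction k with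
  | zero => intro f g _ _; simp
  | succ p ih =>
    refine MinorsPos.succ (ih (by omega)) fun f g hf hg hfc hgc => ?_
    obtain ⟨ha, hb, heq⟩ := exists_submatrix_eq_ctgSub A hf hg hfc hgc
    rw [heq]
    exact h _ _ _ ha hb hk

/-- Fekete. If all contiguous minors of `A` of size at most `r` are
positive, then `A` is totally positive of order `r`. -/
theorem contiguous_minors_pos_imp_TPr {m n : ℕ} (hm : 1 ≤ m) (hn : 1 ≤ n)
    (r : ℕ) (hr : 1 ≤ r) (A : Matrix (Fin m) (Fin n) ℝ)
    (h : ∀ (k a b : ℕ) (ha : a + k ≤ m) (hb : b + k ≤ n),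
      k ≤ r → 0 < (ctgSub A k a b ha hb).det) :
    IsTPr A r :=
  contiguous_minors_pos_imp_TPr_general r A h
end

section
/- Let A be an m-by-n real matrix and let r ≥ 1. Suppose that all the initial minors of A of size at most r−1 are positive, and that all the contiguous minors of A of size r are positive. Then A is totally positive of order r (TP_r). -/
noncomputable def Function.Injective.equivOfCardEq {α β : Type*} [Fintype α] [Fintype β]
    {f : α → β} (hf : Function.Injective f) (hcard : Fintype.card α = Fintype.card β) :
    α ≃ β :=
  Equiv.ofBijective f ((Fintype.bijective_iff_injective_and_card f).2 ⟨hf, hcard⟩)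

namespace Matrix

variable {R : Type*} [CommRing R]

theorem det_submatrix_mul_det_submatrix_swap {α β : Type*} [Fintype α] [DecidableEq α]
    [Fintype β] [DecidableEq β] (σ τ : α ≃ β) (X Y : Matrix β β R) :
    (X.submatrix σ τ).det * (Y.submatrix τ σ).det = X.det * Y.det := by
  set π : Equiv.Perm β := τ.symm.trans σ
  have hX : X.submatrix σ τ = (X.submatrix π id).submatrix τ τ := by ext; simp [π]
  have hY : Y.submatrix τ σ = (Y.submatrix id π).submatrix τ τ := by ext; simp [π]
  rw [hX, hY, det_submatrix_equiv_self, det_submatrix_equiv_self, det_permute, det_permute']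
  calc _ = ((Equiv.Perm.sign π * Equiv.Perm.sign π : ℤˣ) : R) * (X.det * Y.det) := by
        push_cast; ring
    _ = X.det * Y.det := by rw [Int.units_mul_self, Units.val_one, Int.cast_one, one_mul]

def withOuter {ι : Type*} (i : Fin 2) : Unit ⊕ ι → Fin 2 ⊕ ι := Sum.map (fun _ => i) id

theorem det_mul_det_toBlocks₂₂ {ι : Type*} [Fintype ι] [DecidableEq ι]
    (M : Matrix (Fin 2 ⊕ ι) (Fin 2 ⊕ ι) R) (hD : IsUnit M.toBlocks₂₂.det) :
    M.det * M.toBlocks₂₂.det =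
      (M.submatrix (withOuter 0) (withOuter 0)).det *
          (M.submatrix (withOuter 1) (withOuter 1)).det -
        (M.submatrix (withOuter 0) (withOuter 1)).det *
          (M.submatrix (withOuter 1) (withOuter 0)).det := by
  let _ := M.toBlocks₂₂.invertibleOfIsUnitDet hD
  -- each corner minor is `det D` times an entry of the Schur complement of `D = M.toBlocks₂₂`
  set S := M.toBlocks₁₁ - M.toBlocks₁₂ * ⅟M.toBlocks₂₂ * M.toBlocks₂₁
  have hcorner (i j : Fin 2) :
      (M.submatrix (withOuter i) (withOuter j)).det = M.toBlocks₂₂.det * S i j := by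
    have : M.submatrix (withOuter i) (withOuter j) =
        fromBlocks (of fun _ _ => M.toBlocks₁₁ i j) (of fun _ l => M.toBlocks₁₂ i l)
          (of fun l _ => M.toBlocks₂₁ l j) M.toBlocks₂₂ := by
      ext (_ | _) (_ | _) <;> rfl
    rw [this, det_fromBlocks₂₂]
    congr 1
    simp [S, sub_apply, mul_apply]
  rw [← fromBlocks_toBlocks M, det_fromBlocks₂₂, fromBlocks_toBlocks, hcorner, hcorner,
    hcorner, hcorner, det_fin_two]
  ring

theorem desnanot_jacobi {k : ℕ} (M : Matrix (Fin (k + 2)) (Fin (k + 2)) R)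
    (hD : IsUnit (M.submatrix (Fin.castSucc ∘ Fin.succ) (Fin.castSucc ∘ Fin.succ)).det) :
    M.det * (M.submatrix (Fin.castSucc ∘ Fin.succ) (Fin.castSucc ∘ Fin.succ)).det =
      (M.submatrix Fin.castSucc Fin.castSucc).det * (M.submatrix Fin.succ Fin.succ).det -
        (M.submatrix Fin.castSucc Fin.succ).det * (M.submatrix Fin.succ Fin.castSucc).det := by
  -- `e` gathers the first and last index into the block `Fin 2`; the two mixed corners are then
  -- reindexed by different bijections on rows and columns, at the cost of the same sign twice
  let e : Fin 2 ⊕ Fin k ≃ Fin (k + 2) :=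
    (Function.Injective.sumElim (f := ![0, Fin.last (k + 1)]) (g := Fin.castSucc ∘ Fin.succ)
      (by simp [Function.Injective, Fin.forall_fin_two])
      ((Fin.castSucc_injective _).comp (Fin.succ_injective _))
      (Fin.forall_fin_two.2 ⟨fun l => (Fin.castSucc_ne_zero_iff.2 (Fin.succ_ne_zero l)).symm,
        fun _ => (Fin.castSucc_lt_last _).ne'⟩)).equivOfCardEq
      (by simp only [Fintype.card_sum, Fintype.card_fin]; omega)
  let τ₀ : Unit ⊕ Fin k ≃ Fin (k + 1) :=
    (Function.Injective.sumElim (f := fun _ => 0) (g := Fin.succ) (fun _ _ _ => rfl)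
      (Fin.succ_injective _) (fun _ l => (Fin.succ_ne_zero l).symm)).equivOfCardEq
      (by simp [add_comm])
  let τ₁ : Unit ⊕ Fin k ≃ Fin (k + 1) :=
    (Function.Injective.sumElim (f := fun _ => Fin.last k) (g := Fin.castSucc) (fun _ _ _ => rfl)
      (Fin.castSucc_injective _) (fun _ l => (Fin.castSucc_ne_last l).symm)).equivOfCardEq
      (by simp [add_comm])
  have h₀ : e ∘ withOuter 0 = Fin.castSucc ∘ τ₀ := by
    ext (_ | l) : 1 <;> simp [e, τ₀, withOuter, Function.Injective.equivOfCardEq]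
  have h₁ : e ∘ withOuter 1 = Fin.succ ∘ τ₁ := by
    ext (_ | l) : 1 <;> simp [e, τ₁, withOuter, Function.Injective.equivOfCardEq]
  have key := det_mul_det_toBlocks₂₂ (M.submatrix e e) hD
  simp only [det_submatrix_equiv_self, submatrix_submatrix, h₀, h₁] at key
  rw [← submatrix_submatrix M _ _ τ₀ τ₀, ← submatrix_submatrix M _ _ τ₁ τ₁,
    ← submatrix_submatrix M _ _ τ₀ τ₁, ← submatrix_submatrix M _ _ τ₁ τ₀,
    det_submatrix_equiv_self, det_submatrix_equiv_self,
    det_submatrix_mul_det_submatrix_swap] at key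
  exact key

theorem det_eq_of_col_last_eq_single {n : ℕ} (M : Matrix (Fin (n + 1)) (Fin (n + 1)) R)
    (j : Fin (n + 1)) (h : ∀ i, M i (Fin.last n) = (Pi.single j 1 : Fin (n + 1) → R) i) :
    M.det = (-1) ^ (j + n : ℕ) * (M.submatrix j.succAbove Fin.castSucc).det := by
  rw [det_succ_column M (Fin.last n), Finset.sum_eq_single j]
  · simp [h, Fin.succAbove_last]
  · intro i _ hi
    simp [h, hi]
  · simp

theorem three_term_plucker {k : ℕ} (N : Matrix (Fin (k + 2)) (Fin (k + 1)) R)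
    (i : Fin k) (hD : IsUnit (N.submatrix (Fin.castSucc ∘ Fin.succ) Fin.succ).det) :
    (N.submatrix i.succ.castSucc.succAbove id).det *
        (N.submatrix (Fin.castSucc ∘ Fin.succ) Fin.succ).det =
      (N.submatrix Fin.castSucc id).det *
          (N.submatrix (Fin.succ ∘ i.castSucc.succAbove) Fin.succ).det +
        (N.submatrix Fin.succ id).det *
          (N.submatrix (Fin.castSucc ∘ i.succ.succAbove) Fin.succ).det := by
  -- border `N` by the unit column at the inner row `i + 1` and expand Desnanot–Jacobi for the
  -- bordered matrix along that column
  let M : Matrix (Fin (k + 2)) (Fin (k + 2)) R :=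
    of fun a => Fin.snoc (α := fun _ => R) (N a) ((Pi.single i.succ.castSucc 1 : _ → R) a)
  have hM {ι κ : Type} (r : ι → Fin (k + 2)) (c : κ → Fin (k + 1)) :
      M.submatrix r (Fin.castSucc ∘ c) = N.submatrix r c := by
    ext; simp [M]
  have hM' {ι : Type} (r : ι → Fin (k + 2)) : M.submatrix r Fin.castSucc = N.submatrix r id :=
    hM r id
  have key := desnanot_jacobi M (by rwa [hM])
  rw [det_eq_of_col_last_eq_single M i.succ.castSucc (by simp [M]),
    det_eq_of_col_last_eq_single (M.submatrix Fin.succ Fin.succ) i.castSucc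
      (by simp [M, Pi.single_apply, Fin.ext_iff]),
    det_eq_of_col_last_eq_single (M.submatrix Fin.castSucc Fin.succ) i.succ
      (by simp [M, Pi.single_apply, Fin.ext_iff])] at key
  have hcol : (Fin.succ ∘ Fin.castSucc : Fin k → Fin (k + 1 + 1)) = Fin.castSucc ∘ Fin.succ :=
    funext Fin.succ_castSucc
  simp only [submatrix_submatrix, hcol, hM, hM', Fin.val_succ, Fin.val_castSucc] at key
  apply (isUnit_neg_one.pow (i + k : ℕ)).mul_left_cancel
  linear_combination key

end Matrix

theorem pos_of_mul_eq_add_mul {α : Type*} [Semiring α] [LinearOrder α] [IsStrictOrderedRing α]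
    {x y a b c d : α} (h : x * y = a * b + c * d) (hy : 0 < y) (ha : 0 < a) (hb : 0 < b)
    (hc : 0 < c) (hd : 0 < d) : 0 < x :=
  pos_of_mul_pos_left (h ▸ by positivity) hy.le

section Positivity

variable {K : Type*} [Field K] [LinearOrder K] [IsStrictOrderedRing K]

theorem det_submatrix_pos_of_succAbove {m n q : ℕ} (A : Matrix (Fin m) (Fin n) K)
    {u : Fin (q + 2) → Fin m} {g : Fin (q + 1) → Fin n} (hu : StrictMono u) (hg : StrictMono g)
    (t : Fin q)
    (hminor : ∀ (f : Fin q → Fin m) (g' : Fin q → Fin n), StrictMono f → StrictMono g' →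
      0 < (A.submatrix f g').det)
    (h₀ : 0 < (A.submatrix (u ∘ Fin.castSucc) g).det)
    (h₁ : 0 < (A.submatrix (u ∘ Fin.succ) g).det) :
    0 < (A.submatrix (u ∘ t.succ.castSucc.succAbove) g).det := by
  have hg' := hg.comp Fin.strictMono_succ
  have hinner := hminor _ _ (hu.comp (Fin.strictMono_castSucc.comp Fin.strictMono_succ)) hg'
  have key := Matrix.three_term_plucker (A.submatrix u g) t (by simpa using hinner.ne')
  simp only [Matrix.submatrix_submatrix, Function.comp_id] at key
  refine pos_of_mul_eq_add_mul key hinner h₀ (hminor _ _ ?_ hg') h₁ (hminor _ _ ?_ hg')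
  · exact hu.comp (Fin.strictMono_succ.comp (Fin.strictMono_succAbove _))
  · exact hu.comp (Fin.strictMono_castSucc.comp (Fin.strictMono_succAbove _))

theorem exists_eq_castLE_natAdd {q m : ℕ} {f : Fin (q + 1) → Fin m} (hf : StrictMono f)
    (h : ∀ t : Fin q, (f t.succ : ℕ) ≤ f t.castSucc + 1) :
    ∃ (a : ℕ) (ha : a + (q + 1) ≤ m), f = Fin.castLE ha ∘ Fin.natAdd a := by
  have hval (i : Fin (q + 1)) : (f i : ℕ) = f 0 + i := by
    induction i using Fin.induction with
    | zero => simp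
    | succ t ih =>
      have := h t
      have := Fin.lt_def.1 (hf (Fin.castSucc_lt_succ (i := t)))
      simp only [Fin.val_succ, Fin.val_castSucc] at *
      omega
  refine ⟨f 0, by have := hval (Fin.last q); simp only [Fin.val_last] at this; omega, ?_⟩
  ext i
  exact hval i

theorem exists_insertNth_of_gap {q m : ℕ} {f : Fin (q + 1) → Fin m} (hf : StrictMono f)
    {t : Fin q} (ht : (f t.castSucc : ℕ) + 1 < f t.succ) :
    ∃ u : Fin (q + 2) → Fin m, StrictMono u ∧ u ∘ t.succ.castSucc.succAbove = f ∧
      u 0 = f 0 ∧ u (Fin.last (q + 1)) = f (Fin.last q) := by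
  let p : Fin m := ⟨f t.castSucc + 1, by omega⟩
  have hsucc := Fin.insertNth_comp_succAbove t.succ.castSucc p f
  refine ⟨Fin.insertNth t.succ.castSucc p f, ?_, hsucc, ?_, ?_⟩
  · refine (Fin.strictMono_insertNth_iff _ _ _).2 ⟨hf, fun i hi => ?_, fun i hi => ?_⟩
    · have hit : i ≤ t.castSucc := Fin.le_castSucc_iff.2 (Fin.castSucc_lt_castSucc_iff.1 hi)
      exact Fin.lt_def.2 (Nat.lt_succ_of_le (hf.monotone hit))
    · have hti : t.succ ≤ i := Fin.castSucc_le_castSucc_iff.1 hi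
      exact lt_of_lt_of_le (Fin.lt_def.2 ht) (hf.monotone hti)
  · have := congrFun hsucc 0
    rwa [Function.comp_apply, Fin.succAbove_ne_zero_zero (by simp)] at this
  · have := congrFun hsucc (Fin.last q)
    rwa [Function.comp_apply, Fin.succAbove_ne_last_last (Fin.castSucc_lt_last _).ne] at this

theorem det_submatrix_pos_of_consecutive_rows {m n q : ℕ} (A : Matrix (Fin m) (Fin n) K)
    {g : Fin (q + 1) → Fin n} (hg : StrictMono g)
    (hminor : ∀ (f : Fin q → Fin m) (g' : Fin q → Fin n), StrictMono f → StrictMono g' →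
      0 < (A.submatrix f g').det)
    (hconsec : ∀ (a : ℕ) (ha : a + (q + 1) ≤ m),
      0 < (A.submatrix (Fin.castLE ha ∘ Fin.natAdd a) g).det)
    {f : Fin (q + 1) → Fin m} (hf : StrictMono f) : 0 < (A.submatrix f g).det := by
  induction hs : (f (Fin.last q) : ℕ) - f 0 using Nat.strong_induction_on generalizing f with
  | _ s ih =>
  by_cases hgap : ∃ t : Fin q, (f t.castSucc : ℕ) + 1 < f t.succ
  · obtain ⟨t, ht⟩ := hgap
    -- fill the gap after row `t`; dropping the first or the last of the `q + 2` rows then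
    -- shortens the span
    obtain ⟨u, hu, hfu, hu₀, hu₁⟩ := exists_insertNth_of_gap hf ht
    have hfirst : (f 0 : ℕ) < u 1 := hu₀ ▸ hu (Fin.succ_pos 0)
    have hlast : (u (Fin.last q).castSucc : ℕ) < f (Fin.last q) :=
      hu₁ ▸ hu (Fin.castSucc_lt_last _)
    have hmid : (u 1 : ℕ) ≤ u (Fin.last q).castSucc :=
      hu.monotone (Fin.le_def.2 (by simpa using t.pos.nat_succ_le))
    rw [← hfu]
    refine det_submatrix_pos_of_succAbove A hu hg t hminor
      (ih _ ?_ (hu.comp Fin.strictMono_castSucc) rfl) (ih _ ?_ (hu.comp Fin.strictMono_succ) rfl)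
    · simp only [Function.comp_apply, Fin.castSucc_zero, hu₀]
      omega
    · simp only [Function.comp_apply, Fin.succ_last, Nat.succ_eq_add_one, Fin.succ_zero_eq_one,
        hu₁]
      omega
  · push Not at hgap
    obtain ⟨a, ha, rfl⟩ := exists_eq_castLE_natAdd hf hgap
    exact hconsec a ha

end Positivity

section ContiguousMinors

open Matrix

variable {m n : ℕ} (A : Matrix (Fin m) (Fin n) ℝ)

theorem ctgSub_submatrix {K k a b s t : ℕ} (ha : a + K ≤ m) (hb : b + K ≤ n)
    {f g : Fin k → Fin K} (hf : ∀ i, (f i : ℕ) = s + i) (hg : ∀ j, (g j : ℕ) = t + j)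
    (ha' : a + s + k ≤ m) (hb' : b + t + k ≤ n) :
    (ctgSub A K a b ha hb).submatrix f g = ctgSub A k (a + s) (b + t) ha' hb' := by
  ext i j
  simp only [ctgSub, submatrix_apply, of_apply, hf, hg, add_assoc]

theorem ctgSub_det_pos {r : ℕ}
    (hinit : ∀ (k a b : ℕ) (ha : a + k ≤ m) (hb : b + k ≤ n),
      k ≤ r - 1 → (a = 0 ∨ b = 0) → 0 < (ctgSub A k a b ha hb).det)
    (hctg : ∀ (a b : ℕ) (ha : a + r ≤ m) (hb : b + r ≤ n), 0 < (ctgSub A r a b ha hb).det)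
    {k a b : ℕ} (hk : k ≤ r) (ha : a + k ≤ m) (hb : b + k ≤ n) :
    0 < (ctgSub A k a b ha hb).det := by
  induction hs : a + b + k using Nat.strong_induction_on generalizing a b k with
  | _ s ih =>
  obtain rfl | hkr := eq_or_lt_of_le hk
  · exact hctg a b ha hb
  by_cases hab : a = 0 ∨ b = 0
  · exact hinit k a b ha hb (by omega) hab
  obtain ⟨a, rfl⟩ : ∃ a', a = a' + 1 := Nat.exists_eq_add_one.2 (by omega)
  obtain ⟨b, rfl⟩ : ∃ b', b = b' + 1 := Nat.exists_eq_add_one.2 (by omega)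
  obtain _ | q := k
  · simp
  -- the target is the lower-right corner of the contiguous block `M`; the other terms of
  -- Desnanot–Jacobi for `M` have a smaller value of `a + b + k`
  let M := ctgSub A (q + 2) a b (by omega) (by omega)
  have hcorner {k' s' t' : ℕ} {f g : Fin k' → Fin (q + 2)} (hf : ∀ i, (f i : ℕ) = s' + i)
      (hg : ∀ j, (g j : ℕ) = t' + j) (hsize : s' + t' + k' ≤ q + 2) :
      0 < (M.submatrix f g).det := by
    rw [ctgSub_submatrix A _ _ hf hg (by omega) (by omega)]
    exact ih _ (by omega) (by omega) _ _ rfl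
  have hM : 0 < M.det := ih _ (by omega) (by omega) _ _ rfl
  have hmid := hcorner (f := Fin.castSucc ∘ Fin.succ) (g := Fin.castSucc ∘ Fin.succ) (s' := 1)
    (t' := 1) (fun _ => add_comm _ _) (fun _ => add_comm _ _) (by omega)
  have hcc := hcorner (f := Fin.castSucc) (g := Fin.castSucc) (s' := 0) (t' := 0)
    (fun _ => (zero_add _).symm) (fun _ => (zero_add _).symm) (by omega)
  have hcs := hcorner (f := Fin.castSucc) (g := Fin.succ) (s' := 0) (t' := 1)
    (fun _ => (zero_add _).symm) (fun _ => add_comm _ _) (by omega)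
  have hsc := hcorner (f := Fin.succ) (g := Fin.castSucc) (s' := 1) (t' := 0)
    (fun _ => add_comm _ _) (fun _ => (zero_add _).symm) (by omega)
  have key := desnanot_jacobi M hmid.ne'.isUnit
  have hss : M.submatrix Fin.succ Fin.succ = ctgSub A (q + 1) (a + 1) (b + 1) ha hb :=
    ctgSub_submatrix A _ _ (fun _ => add_comm _ _) (fun _ => add_comm _ _) _ _
  rw [← hss]
  exact pos_of_mul_eq_add_mul (by linear_combination -key) hcc hM hmid hcs hsc

theorem isTPr_of_ctgSub_det_pos {r : ℕ}
    (h : ∀ k ≤ r, ∀ (a b : ℕ) (ha : a + k ≤ m) (hb : b + k ≤ n),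
      0 < (ctgSub A k a b ha hb).det) :
    IsTPr A r := by
  intro k
  induction k with
  | zero => intros; simp
  | succ q ih =>
    intro hq
    have hminor := ih (by omega)
    have hminor' (f : Fin q → Fin n) (g : Fin q → Fin m) (hf : StrictMono f)
        (hg : StrictMono g) : 0 < (Aᵀ.submatrix f g).det := by
      rw [← transpose_submatrix, det_transpose]
      exact hminor g f hg hf
    have hrows (a : ℕ) (ha : a + (q + 1) ≤ m) (g : Fin (q + 1) → Fin n) (hg : StrictMono g) :
        0 < (A.submatrix (Fin.castLE ha ∘ Fin.natAdd a) g).det := by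
      rw [← det_transpose, transpose_submatrix]
      refine det_submatrix_pos_of_consecutive_rows Aᵀ
        ((Fin.strictMono_castLE ha).comp (Fin.strictMono_natAdd a)) hminor' (fun b hb => ?_) hg
      rw [← transpose_submatrix, det_transpose]
      exact h (q + 1) hq a b ha hb
    intro f g hf hg
    exact det_submatrix_pos_of_consecutive_rows A hg hminor (fun a ha => hrows a ha g hg) hf

end ContiguousMinors

theorem initial_and_contiguous_minors_pos_imp_TPr_general {m n : ℕ}
    (r : ℕ) (A : Matrix (Fin m) (Fin n) ℝ)
    (hinit : ∀ (k a b : ℕ) (ha : a + k ≤ m) (hb : b + k ≤ n),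
      k ≤ r - 1 → (a = 0 ∨ b = 0) → 0 < (ctgSub A k a b ha hb).det)
    (hctg : ∀ (a b : ℕ) (ha : a + r ≤ m) (hb : b + r ≤ n),
      0 < (ctgSub A r a b ha hb).det) :
    IsTPr A r :=
  isTPr_of_ctgSub_det_pos A fun _ hk _ _ ha hb => ctgSub_det_pos A hinit hctg hk ha hb

/-- If all initial minors of `A` of size at most `r-1` are positive
and all contiguous minors of `A` of size `r` are positive, then `A` is TP_r. -/
theorem initial_and_contiguous_minors_pos_imp_TPr {m n : ℕ}
    (r : ℕ) (hr : 1 ≤ r) (A : Matrix (Fin m) (Fin n) ℝ)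
    (hinit : ∀ (k a b : ℕ) (ha : a + k ≤ m) (hb : b + k ≤ n),
      k ≤ r - 1 → (a = 0 ∨ b = 0) → 0 < (ctgSub A k a b ha hb).det)
    (hctg : ∀ (a b : ℕ) (ha : a + r ≤ m) (hb : b + r ≤ n),
      0 < (ctgSub A r a b ha hb).det) :
    IsTPr A r :=
  initial_and_contiguous_minors_pos_imp_TPr_general r A hinit hctg
end

section
/- For every m, n ≥ 1 and every r with 1 ≤ r ≤ min(m,n), the set of m-by-n real matrices that are totally positive of order r (TP_r) is dense in the set of m-by-n real matrices that are totally nonnegative of order r (TN_r): for every TN_r matrix A and every ε > 0 there exists a TP_r matrix B with |a_{ij} − b_{ij}| < ε for all entries. -/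
/-!
Pad `A` to the block diagonal matrix `D = A ⊕ I_r`: it is still TN_r, and it has a minor equal
to `1` of every size `k ≤ r`. The Gaussian kernel `G_q = (q ^ (i - j)²)` is TP_r as soon as
`0 < q` and `q · r! < 1`: by the rearrangement inequality, in the Leibniz expansion of any of its
minors the identity permutation carries the unique smallest power of `q`. By Cauchy–Binet every
minor of `G_q D G_q` is a sum of nonnegative products, one of which is positive, so `G_q D G_q` is
TP_r. Since `G_0 = 1`, its leading `m × n` block tends to `A` as `q → 0⁺`.
-/

open Matrix Finset Filter Topology

theorem sum_mul_comp_perm_lt_sum_mul_of_strictMono {ι α : Type*} [Fintype ι] [LinearOrder ι]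
    [Semiring α] [LinearOrder α] [IsStrictOrderedRing α] [ExistsAddOfLE α] {f g : ι → α}
    (hf : StrictMono f) (hg : StrictMono g) {σ : Equiv.Perm ι} (hσ : σ ≠ 1) :
    ∑ i, f i * g (σ i) < ∑ i, f i * g i := by
  have hfg : Monovary f g := fun i j h => (hf (hg.lt_iff_lt.1 h)).le
  refine hfg.sum_mul_comp_perm_lt_sum_mul_iff.2 fun h => hσ ?_
  have hσmono : StrictMono σ := fun i j hij => by
    by_contra hle
    have hlt : σ j < σ i := (not_lt.1 hle).lt_of_ne (σ.injective.ne hij.ne')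
    exact (h (hg hlt)).not_gt (hf hij)
  exact Equiv.ext (congrFun hσmono.eq_id)

theorem Nat.dist_sq_add_two_mul (a b : ℕ) : Nat.dist a b ^ 2 + 2 * a * b = a ^ 2 + b ^ 2 := by
  rcases le_total a b with h | h
  · obtain ⟨d, rfl⟩ := Nat.exists_eq_add_of_le h
    rw [Nat.dist_eq_sub_of_le h, Nat.add_sub_cancel_left]
    ring
  · obtain ⟨d, rfl⟩ := Nat.exists_eq_add_of_le h
    rw [Nat.dist_eq_sub_of_le_right h, Nat.add_sub_cancel_left]
    ring

theorem sum_dist_sq_lt_sum_dist_sq_comp_perm {ι : Type*} [Fintype ι] [LinearOrder ι]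
    {a b : ι → ℕ} (ha : StrictMono a) (hb : StrictMono b) {σ : Equiv.Perm ι} (hσ : σ ≠ 1) :
    ∑ i, Nat.dist (a i) (b i) ^ 2 < ∑ i, Nat.dist (a (σ i)) (b i) ^ 2 := by
  have expand : ∀ τ : Equiv.Perm ι, ∑ i, Nat.dist (a (τ i)) (b i) ^ 2 + 2 * ∑ i, b i * a (τ i)
      = ∑ i, a i ^ 2 + ∑ i, b i ^ 2 := fun τ => by
    rw [← Equiv.sum_comp τ (fun i => a i ^ 2), ← sum_add_distrib, mul_sum, ← sum_add_distrib]
    refine sum_congr rfl fun i _ => ?_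
    rw [← Nat.dist_sq_add_two_mul]
    ring
  have hrearr := sum_mul_comp_perm_lt_sum_mul_of_strictMono hb ha hσ
  have hid := expand 1
  have hperm := expand σ
  simp only [Equiv.Perm.one_apply] at hid
  omega

theorem sum_mul_pow_pos_of_unique_min {ι : Type*} [Fintype ι] {c : ι → ℝ} {e : ι → ℕ} {q : ℝ}
    (a : ι) (hca : c a = 1) (hc : ∀ x, |c x| ≤ 1) (he : ∀ x ≠ a, e a < e x) (hq : 0 < q)
    (hqι : q * Fintype.card ι < 1) : 0 < ∑ x, c x * q ^ e x := by
  classical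
  have hq1 : q < 1 := by
    have : (1 : ℝ) ≤ Fintype.card ι := by exact_mod_cast Fintype.card_pos_iff.2 ⟨a⟩
    nlinarith
  have hrest : |∑ x ∈ univ.erase a, c x * q ^ e x| ≤ Fintype.card ι * q * q ^ e a := by
    calc |∑ x ∈ univ.erase a, c x * q ^ e x|
        ≤ ∑ x ∈ univ.erase a, q * q ^ e a := by
          refine (abs_sum_le_sum_abs _ _).trans (sum_le_sum fun x hx => ?_)
          rw [abs_mul, abs_of_pos (pow_pos hq _)]
          calc |c x| * q ^ e x ≤ 1 * q ^ (e a + 1) :=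
                mul_le_mul (hc x) (pow_le_pow_of_le_one hq.le hq1.le (he x (ne_of_mem_erase hx)))
                  (pow_pos hq _).le zero_le_one
            _ = q * q ^ e a := by ring
      _ ≤ Fintype.card ι * (q * q ^ e a) := by
          rw [sum_const, nsmul_eq_mul]
          gcongr
          exact_mod_cast card_erase_le
      _ = Fintype.card ι * q * q ^ e a := by ring
  rw [← add_sum_erase _ _ (mem_univ a), hca, one_mul]
  have : 0 < q ^ e a := pow_pos hq _
  nlinarith [neg_abs_le (∑ x ∈ univ.erase a, c x * q ^ e x)]

namespace Matrix

variable {R : Type*} [CommRing R]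

theorem det_mul_eq_sum_prod_mul_det {ι κ : Type*} [Fintype ι] [DecidableEq ι] [Fintype κ]
    (P : Matrix ι κ R) (Q : Matrix κ ι R) :
    (P * Q).det = ∑ φ : ι → κ, (∏ i, P i (φ i)) * (Q.submatrix φ id).det := by
  have hrows : (fun i => (P * Q) i) = fun i => ∑ x, P i x • Q x := by
    ext i j
    simp [mul_apply, Finset.sum_apply]
  change detRowAlternating.toMultilinearMap (fun i => (P * Q) i) = _
  rw [hrows, MultilinearMap.map_sum]
  refine sum_congr rfl fun φ _ => ?_
  rw [MultilinearMap.map_smul_univ]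
  rfl

theorem det_mul_eq_sum_det_mul_det {k : ℕ} {κ : Type*} [Fintype κ] [LinearOrder κ]
    (P : Matrix (Fin k) κ R) (Q : Matrix κ (Fin k) R) :
    (P * Q).det = ∑ γ : Fin k ↪o κ, (P.submatrix id γ).det * (Q.submatrix γ id).det := by
  classical
  have hcomp : Function.Injective fun x : (Fin k ↪o κ) × Equiv.Perm (Fin k) => x.1 ∘ x.2 := by
    rintro ⟨γ₁, σ₁⟩ ⟨γ₂, σ₂⟩ h
    simp only at h
    have hγ : γ₁ = γ₂ := by
      refine DFunLike.coe_injective ((γ₁.strictMono.range_inj γ₂.strictMono).1 ?_)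
      rw [← σ₁.surjective.range_comp, h, σ₂.surjective.range_comp]
    subst hγ
    exact Prod.ext rfl (Equiv.ext fun i => γ₁.injective (congrFun h i))
  -- an injective `φ` is `γ ∘ σ⁻¹`, where `σ` sorts it
  have hrange : ∀ φ : Fin k → κ, Function.Injective φ →
      φ ∈ Set.range fun x : (Fin k ↪o κ) × Equiv.Perm (Fin k) => x.1 ∘ x.2 := fun φ hφ =>
    ⟨(OrderEmbedding.ofStrictMono _ ((Tuple.monotone_sort φ).strictMono_of_injective
      (hφ.comp (Tuple.sort φ).injective)), (Tuple.sort φ)⁻¹), by ext i; simp⟩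
  rw [det_mul_eq_sum_prod_mul_det, ← Fintype.sum_of_injective _ hcomp _ _ ?vanish (fun _ => rfl),
    Fintype.sum_prod_type]
  · refine sum_congr rfl fun γ _ => ?_
    rw [← det_transpose (P.submatrix id γ), det_apply', sum_mul]
    refine sum_congr rfl fun σ _ => ?_
    rw [show Q.submatrix (γ ∘ σ) id = (Q.submatrix γ id).submatrix σ id from rfl, det_permute]
    simp only [transpose_apply, submatrix_apply, id, Function.comp_apply]
    ring
  · intro φ hφ
    obtain ⟨a, b, hab, hne⟩ := Function.not_injective_iff.1 fun hinj => hφ (hrange φ hinj)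
    rw [det_zero_of_row_eq hne (by ext j; simp [hab]), mul_zero]

theorem det_eq_zero_of_card_lt {ι : Type*} [Fintype ι] [DecidableEq ι] {M : Matrix ι ι R}
    {P Q : ι → Prop} [DecidablePred P] [DecidablePred Q] (hcard : #{i | P i} < #{j | Q j})
    (hM : ∀ i j, ¬ P i → Q j → M i j = 0) : M.det = 0 := by
  rw [det_apply]
  refine sum_eq_zero fun σ _ => ?_
  obtain ⟨j, hQ, hP⟩ : ∃ j, Q j ∧ ¬ P (σ j) := by
    by_contra! h
    exact hcard.not_ge (card_le_card_of_injOn σ (fun j hj => by simp_all) σ.injective.injOn)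
  rw [prod_eq_zero (f := fun i => M (σ i) i) (mem_univ j) (hM _ _ hP hQ), smul_zero]

def directSum {α : Type*} [Zero α] {m n m' n' : ℕ} (A : Matrix (Fin m) (Fin n) α)
    (B : Matrix (Fin m') (Fin n') α) : Matrix (Fin (m + m')) (Fin (n + n')) α :=
  reindex finSumFinEquiv finSumFinEquiv (fromBlocks A 0 0 B)

section directSum

variable {α : Type*} [Zero α] {m n m' n' : ℕ} (A : Matrix (Fin m) (Fin n) α)
  (B : Matrix (Fin m') (Fin n') α)

@[simp]
theorem directSum_castAdd_castAdd (i : Fin m) (j : Fin n) :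
    directSum A B (Fin.castAdd m' i) (Fin.castAdd n' j) = A i j := by
  simp [directSum]

@[simp]
theorem directSum_natAdd_natAdd (i : Fin m') (j : Fin n') :
    directSum A B (Fin.natAdd m i) (Fin.natAdd n j) = B i j := by
  simp [directSum]

theorem directSum_apply (i : Fin (m + m')) (j : Fin (n + n')) :
    directSum A B i j =
      if hi : (i : ℕ) < m then if hj : (j : ℕ) < n then A ⟨i, hi⟩ ⟨j, hj⟩ else 0
      else if hj : (j : ℕ) < n then 0 else B ⟨i - m, by omega⟩ ⟨j - n, by omega⟩ := by
  induction i using Fin.addCases <;> induction j using Fin.addCases <;> simp [directSum]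

end directSum

end Matrix

theorem det_submatrix_mul_nonneg {l m n k : ℕ} {X : Matrix (Fin l) (Fin m) ℝ}
    {Y : Matrix (Fin m) (Fin n) ℝ} {α : Fin k → Fin l} {β : Fin k → Fin n}
    (h : ∀ γ : Fin k ↪o Fin m, 0 ≤ (X.submatrix α γ).det * (Y.submatrix γ β).det) :
    0 ≤ ((X * Y).submatrix α β).det := by
  rw [submatrix_mul _ _ _ id _ Function.bijective_id, det_mul_eq_sum_det_mul_det]
  exact sum_nonneg fun γ _ => h γ

theorem det_submatrix_mul_pos {l m n k : ℕ} {X : Matrix (Fin l) (Fin m) ℝ}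
    {Y : Matrix (Fin m) (Fin n) ℝ} {α : Fin k → Fin l} {β : Fin k → Fin n}
    (h : ∀ γ : Fin k ↪o Fin m, 0 ≤ (X.submatrix α γ).det * (Y.submatrix γ β).det)
    (hpos : ∃ γ : Fin k ↪o Fin m, 0 < (X.submatrix α γ).det * (Y.submatrix γ β).det) :
    0 < ((X * Y).submatrix α β).det := by
  rw [submatrix_mul _ _ _ id _ Function.bijective_id, det_mul_eq_sum_det_mul_det]
  obtain ⟨γ, hγ⟩ := hpos
  exact sum_pos' (fun γ _ => h γ) ⟨γ, mem_univ _, hγ⟩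

theorem IsTPr.submatrix {m n m' n' r : ℕ} {A : Matrix (Fin m) (Fin n) ℝ} (hA : IsTPr A r)
    {u : Fin m' → Fin m} {v : Fin n' → Fin n} (hu : StrictMono u) (hv : StrictMono v) :
    IsTPr (A.submatrix u v) r := fun k hk f g hf hg => by
  simpa only [submatrix_submatrix] using hA k hk _ _ (hu.comp hf) (hv.comp hg)

theorem IsTPr.mul_isTNr_mul {l m n p r : ℕ} {X : Matrix (Fin l) (Fin m) ℝ}
    {Y : Matrix (Fin m) (Fin n) ℝ} {Z : Matrix (Fin n) (Fin p) ℝ} (hX : IsTPr X r)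
    (hY : IsTNr Y r) (hYpos : ∀ k ≤ r, ∃ (f : Fin k → Fin m) (g : Fin k → Fin n),
      StrictMono f ∧ StrictMono g ∧ 0 < (Y.submatrix f g).det)
    (hZ : IsTPr Z r) : IsTPr (X * Y * Z) r := by
  intro k hk α β hα hβ
  obtain ⟨f, g, hf, hg, hfg⟩ := hYpos k hk
  have hXY : ∀ δ : Fin k ↪o Fin n, 0 ≤ ((X * Y).submatrix α δ).det := fun δ =>
    det_submatrix_mul_nonneg fun γ =>
      mul_nonneg (hX k hk _ _ hα γ.strictMono).le (hY k hk _ _ γ.strictMono δ.strictMono)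
  refine det_submatrix_mul_pos (fun δ => mul_nonneg (hXY δ) (hZ k hk _ _ δ.strictMono hβ).le)
    ⟨.ofStrictMono g hg, mul_pos ?_ (hZ k hk _ _ hg hβ)⟩
  exact det_submatrix_mul_pos
    (fun γ => mul_nonneg (hX k hk _ _ hα γ.strictMono).le (hY k hk _ _ γ.strictMono hg))
    ⟨.ofStrictMono f hf, mul_pos (hX k hk _ _ hα hf) hfg⟩

theorem IsTNr.det_submatrix_nonneg {m n r : ℕ} {A : Matrix (Fin m) (Fin n) ℝ} (hA : IsTNr A r)
    {ι : Type*} [Fintype ι] [LinearOrder ι] (hι : Fintype.card ι ≤ r) {f : ι → Fin m}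
    {g : ι → Fin n} (hf : StrictMono f) (hg : StrictMono g) : 0 ≤ (A.submatrix f g).det := by
  classical
  let e := Fintype.orderIsoFinOfCardEq ι rfl
  rw [← det_submatrix_equiv_self e.toEquiv, submatrix_submatrix]
  exact hA _ hι _ _ (hf.comp e.strictMono) (hg.comp e.strictMono)

theorem isTNr_one (N r : ℕ) : IsTNr (1 : Matrix (Fin N) (Fin N) ℝ) r := by
  intro k _ f g hf hg
  by_cases h : ∀ i, ∃ j, f i = g j
  · choose σ hσ using h
    have hσmono : StrictMono σ := fun i j hij => hg.lt_iff_lt.1 (by rw [← hσ, ← hσ]; exact hf hij)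
    have hfg : f = g := funext fun i => by rw [hσ, hσmono.eq_id, id]
    rw [hfg, submatrix_one _ hg.injective, det_one]
    exact zero_le_one
  · obtain ⟨i, hi⟩ := not_forall.1 h
    rw [det_eq_zero_of_row_eq_zero i fun j => by simp [one_apply, not_exists.1 hi j]]

theorem IsTNr.directSum {m n m' n' r : ℕ} {A : Matrix (Fin m) (Fin n) ℝ}
    {B : Matrix (Fin m') (Fin n') ℝ} (hA : IsTNr A r) (hB : IsTNr B r) :
    IsTNr (A.directSum B) r := by
  intro k hk f g hf hg
  set M := (A.directSum B).submatrix f g with hM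
  set P : Fin k → Prop := fun i => (f i : ℕ) < m
  set Q : Fin k → Prop := fun j => (g j : ℕ) < n
  -- The rows of the minor meeting `A` form an initial segment, and so do its columns. If the two
  -- segments have different lengths the minor is singular, otherwise it is block diagonal.
  have hP : ∀ i : Fin k, (i : ℕ) < #{i | P i} ↔ P i := fun i =>
    Fin.lt_card_filter_univ_iff_apply_of_imp P fun _ _ hba ha =>
      (Fin.val_le_of_le (hf.monotone hba)).trans_lt ha
  have hQ : ∀ j : Fin k, (j : ℕ) < #{j | Q j} ↔ Q j := fun j =>
    Fin.lt_card_filter_univ_iff_apply_of_imp Q fun _ _ hba ha =>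
      (Fin.val_le_of_le (hg.monotone hba)).trans_lt ha
  have hM₁ : ∀ i j, ¬ P i → Q j → M i j = 0 := fun i j hi hj => by
    simp [hM, directSum_apply, P, Q, hi, hj]
  have hM₂ : ∀ i j, ¬ ¬ P i → ¬ Q j → M i j = 0 := fun i j hi hj => by
    simp [hM, directSum_apply, P, Q, not_not.1 hi, hj]
  rcases lt_trichotomy #{i | P i} #{j | Q j} with h | h | h
  · exact (det_eq_zero_of_card_lt h hM₁).ge
  · have hPQ : ∀ i, P i ↔ Q i := fun i => by rw [← hP, ← hQ, h]
    have hcard : ∀ (R : Fin k → Prop) [DecidablePred R], Fintype.card {i // R i} ≤ r :=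
      fun R _ => (Fintype.card_subtype_le R).trans (by simpa using hk)
    rw [twoBlockTriangular_det M P fun i hi j hj => hM₁ i j hi ((hPQ j).1 hj)]
    refine mul_nonneg ?_ ?_
    · have hblock : M.toSquareBlockProp P = A.submatrix (fun i : {i // P i} => ⟨f i, i.2⟩)
          (fun j : {j // P j} => ⟨g j, (hPQ j).1 j.2⟩) := by
        ext i j
        have hi : (f i : ℕ) < m := i.2
        have hj : (g j : ℕ) < n := (hPQ j).1 j.2
        simp [hM, toSquareBlockProp, toBlock, directSum_apply, hi, hj]
      rw [hblock]
      exact hA.det_submatrix_nonneg (hcard P)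
        (fun a b hab => Fin.mk_lt_mk.2 (hf (Subtype.coe_lt_coe.2 hab)))
        (fun a b hab => Fin.mk_lt_mk.2 (hg (Subtype.coe_lt_coe.2 hab)))
    · have hblock : M.toSquareBlockProp (fun i => ¬ P i) =
          B.submatrix (fun i : {i // ¬ P i} => ⟨f i - m, by have := i.2; omega⟩)
          (fun j : {j // ¬ P j} => ⟨g j - n, by have := (hPQ j).not.1 j.2; omega⟩) := by
        ext i j
        have hi : ¬ (f i : ℕ) < m := i.2
        have hj : ¬ (g j : ℕ) < n := (hPQ j).not.1 j.2
        simp [hM, toSquareBlockProp, toBlock, directSum_apply, hi, hj]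
      rw [hblock]
      refine hB.det_submatrix_nonneg (hcard _) (fun a b hab => Fin.mk_lt_mk.2 ?_)
        (fun a b hab => Fin.mk_lt_mk.2 ?_)
      · have := Fin.lt_def.1 (hf (Subtype.coe_lt_coe.2 hab))
        have := a.2
        omega
      · have := Fin.lt_def.1 (hg (Subtype.coe_lt_coe.2 hab))
        have := (hPQ a).not.1 a.2
        omega
  · have hcard : #{i | ¬ P i} < #{j | ¬ Q j} := by
      have hP' := card_filter_add_card_filter_not (s := univ) fun i => P i
      have hQ' := card_filter_add_card_filter_not (s := univ) fun j => Q j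
      simp only [card_univ, Fintype.card_fin] at hP' hQ'
      omega
    exact (det_eq_zero_of_card_lt hcard hM₂).ge

theorem exists_det_submatrix_directSum_one_pos {m n r : ℕ} (A : Matrix (Fin m) (Fin n) ℝ)
    {k : ℕ} (hk : k ≤ r) : ∃ (f : Fin k → Fin (m + r)) (g : Fin k → Fin (n + r)),
      StrictMono f ∧ StrictMono g ∧
        0 < ((A.directSum (1 : Matrix (Fin r) (Fin r) ℝ)).submatrix f g).det := by
  refine ⟨Fin.natAdd m ∘ Fin.castLE hk, Fin.natAdd n ∘ Fin.castLE hk,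
    (Fin.strictMono_natAdd m).comp (Fin.strictMono_castLE hk),
    (Fin.strictMono_natAdd n).comp (Fin.strictMono_castLE hk), ?_⟩
  have hone : (A.directSum (1 : Matrix (Fin r) (Fin r) ℝ)).submatrix
      (Fin.natAdd m ∘ Fin.castLE hk) (Fin.natAdd n ∘ Fin.castLE hk) = 1 := by
    ext i j
    simp [one_apply, Fin.castLE_inj]
  rw [hone, det_one]
  exact zero_lt_one

noncomputable def gaussKernel (q : ℝ) (M : ℕ) : Matrix (Fin M) (Fin M) ℝ :=
  of fun i j => q ^ Nat.dist i j ^ 2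

theorem gaussKernel_zero (M : ℕ) : gaussKernel 0 M = 1 := by
  ext i j
  rcases eq_or_ne i j with rfl | h
  · simp [gaussKernel, Nat.dist_self]
  · have : Nat.dist i j ≠ 0 := (Nat.dist_pos_of_ne (Fin.val_ne_of_ne h)).ne'
    simp [gaussKernel, h, this]

theorem continuous_gaussKernel (M : ℕ) : Continuous fun q => gaussKernel q M :=
  continuous_pi fun _ => continuous_pi fun _ => continuous_pow _

theorem gaussKernel_isTPr {q : ℝ} {r : ℕ} (M : ℕ) (hq : 0 < q) (hqr : q * r.factorial < 1) :
    IsTPr (gaussKernel q M) r := by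
  intro k hk f g hf hg
  have hqk : q * (Fintype.card (Equiv.Perm (Fin k)) : ℝ) < 1 := by
    rw [Fintype.card_perm, Fintype.card_fin]
    exact lt_of_le_of_lt (by gcongr) hqr
  rw [det_apply']
  simp only [submatrix_apply, gaussKernel, of_apply, prod_pow_eq_pow_sum]
  refine sum_mul_pow_pos_of_unique_min 1 (by simp) (fun σ => ?_) (fun σ hσ => ?_) hq hqk
  · rcases Int.units_eq_one_or (Equiv.Perm.sign σ) with h | h <;> simp [h]
  · exact sum_dist_sq_lt_sum_dist_sq_comp_perm (a := fun i => (f i : ℕ)) hf hg hσ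

theorem TPr_dense_in_TNr_general {m n : ℕ} (r : ℕ)
    (A : Matrix (Fin m) (Fin n) ℝ) (hA : IsTNr A r)
    (ε : ℝ) (hε : 0 < ε) :
    ∃ B : Matrix (Fin m) (Fin n) ℝ, IsTPr B r ∧ ∀ i j, |A i j - B i j| < ε := by
  set D := A.directSum (1 : Matrix (Fin r) (Fin r) ℝ)
  set S : ℝ → Matrix (Fin (m + r)) (Fin (n + r)) ℝ := fun q =>
    gaussKernel q (m + r) * D * gaussKernel q (n + r)
  have hS : Continuous S :=
    ((continuous_gaussKernel _).matrix_mul continuous_const).matrix_mul (continuous_gaussKernel _)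
  have hS0 : S 0 = D := by simp [S, gaussKernel_zero]
  have hclose : ∀ᶠ q in 𝓝 0, ∀ i j, |A i j - S q (Fin.castAdd r i) (Fin.castAdd r j)| < ε := by
    refine eventually_all.2 fun i => eventually_all.2 fun j => ?_
    have hc : Continuous fun q => |A i j - S q (Fin.castAdd r i) (Fin.castAdd r j)| :=
      continuous_const.sub ((continuous_apply _).comp ((continuous_apply _).comp hS)) |>.abs
    exact hc.continuousAt.eventually_lt continuousAt_const (by simpa [hS0, D] using hε)
  have hsmall : ∀ᶠ q in 𝓝 (0 : ℝ), q * (r.factorial : ℝ) < 1 :=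
    (continuous_id.mul continuous_const).continuousAt.eventually_lt continuousAt_const (by simp)
  obtain ⟨q, ⟨hqA, hqr⟩, hq⟩ :=
    ((hclose.and hsmall).filter_mono nhdsWithin_le_nhds |>.and self_mem_nhdsWithin).exists
      (f := 𝓝[>] 0)
  have hG : ∀ M, IsTPr (gaussKernel q M) r := fun M => gaussKernel_isTPr M hq hqr
  refine ⟨(S q).submatrix (Fin.castAdd r) (Fin.castAdd r), ?_, hqA⟩
  exact ((hG _).mul_isTNr_mul (hA.directSum (isTNr_one r r))
    (fun k hk => exists_det_submatrix_directSum_one_pos A hk) (hG _)).submatrix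
    (Fin.strictMono_castAdd r) (Fin.strictMono_castAdd r)

/-- The `m`-by-`n` TP_r matrices are dense in the `m`-by-`n` TN_r matrices. -/
theorem TPr_dense_in_TNr {m n : ℕ} (hm : 1 ≤ m) (hn : 1 ≤ n)
    (r : ℕ) (hr1 : 1 ≤ r) (hr : r ≤ min m n)
    (A : Matrix (Fin m) (Fin n) ℝ) (hA : IsTNr A r)
    (ε : ℝ) (hε : 0 < ε) :
    ∃ B : Matrix (Fin m) (Fin n) ℝ, IsTPr B r ∧ ∀ i j, |A i j - B i j| < ε :=
  TPr_dense_in_TNr_general r A hA ε hε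
end

section
/- For every n ≥ 1 and every r with 1 ≤ r ≤ n, the set of n-by-n symmetric real matrices that are totally positive of order r (TP_r) is dense in the set of n-by-n symmetric real matrices that are totally nonnegative of order r (TN_r): for every symmetric TN_r matrix A and every ε > 0 there exists a symmetric TP_r matrix B with |a_{ij} − b_{ij}| < ε for all entries. -/
/-!
Induct on the order `k ≤ r`. Given a symmetric TN_r matrix `M` that is TP_k, add `δ > 0` to its
bottom-right entry: a minor through that entry grows by `δ` times the complementary minor and the
others do not change, so the result `C` stays symmetric and TN_r, and its trailing
`(k+1)`-minor becomes positive. Then smooth with `G_s = (sech (s (i - j)))_{ij}`, a Cauchy matrix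
`(x_i + y_j)⁻¹` up to diagonal scalings, hence totally positive, which tends to the identity as
`s → ∞`. By Cauchy–Binet every minor of `G_s C G_s` is a nonnegative combination, with positive
weights, of the minors of `C` of the same size; so `G_s C G_s` is symmetric, TN_r and TP_{k+1},
and close to `C` for large `s`.
-/

open Matrix Finset Filter Topology Real

theorem Tuple.strictMono_comp_sort {k : ℕ} {α : Type*} [LinearOrder α] {φ : Fin k → α}
    (hφ : φ.Injective) : StrictMono (φ ∘ Tuple.sort φ) :=
  (Tuple.monotone_sort φ).strictMono_of_injective (hφ.comp (Tuple.sort φ).injective)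

theorem Tuple.sort_strictMono_comp {k : ℕ} {α : Type*} [LinearOrder α] {s : Fin k → α}
    (hs : StrictMono s) (σ : Equiv.Perm (Fin k)) : Tuple.sort (s ∘ σ) = σ⁻¹ := by
  have h := Tuple.comp_perm_comp_sort_eq_comp_sort (f := s) (σ := σ)
  rw [Tuple.sort_eq_refl_iff_monotone.2 hs.monotone] at h
  exact Equiv.ext fun i => Equiv.Perm.eq_inv_iff_eq.2 (hs.injective (congrFun h i))

def strictMonoProdPermEquiv (k : ℕ) (α : Type*) [LinearOrder α] :
    {s : Fin k → α // StrictMono s} × Equiv.Perm (Fin k) ≃ {φ : Fin k → α // φ.Injective} where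
  toFun p := ⟨p.1.1 ∘ p.2, p.1.2.injective.comp p.2.injective⟩
  invFun φ := (⟨φ.1 ∘ Tuple.sort φ.1, Tuple.strictMono_comp_sort φ.2⟩, (Tuple.sort φ.1)⁻¹)
  left_inv := by
    rintro ⟨⟨s, hs⟩, σ⟩
    simp [Tuple.sort_strictMono_comp hs, Function.comp_assoc]
  right_inv := by
    rintro ⟨φ, hφ⟩
    ext i
    simp

namespace Matrix

section CommRing

variable {R : Type*} [CommRing R]

theorem det_mul_eq_sum_prod_mul_det_submatrix {k n : ℕ} (X : Matrix (Fin k) (Fin n) R)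
    (Y : Matrix (Fin n) (Fin k) R) :
    (X * Y).det = ∑ φ : Fin k → Fin n, (∏ i, X i (φ i)) * (Y.submatrix φ id).det := by
  have hrows : X * Y = of fun i => ∑ l, X i l • Y l := by
    ext i j
    simp [mul_apply, Finset.sum_apply]
  rw [hrows]
  refine (detRowAlternating.toMultilinearMap.map_sum (fun i l => X i l • Y l)).trans ?_
  exact Finset.sum_congr rfl fun φ _ =>
    detRowAlternating.toMultilinearMap.map_smul_univ (fun i => X i (φ i)) (fun i => Y (φ i))

/-- The Cauchy–Binet formula. -/
theorem det_mul_eq_sum_strictMono {k n : ℕ} (X : Matrix (Fin k) (Fin n) R)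
    (Y : Matrix (Fin n) (Fin k) R) :
    (X * Y).det = ∑ s : {s : Fin k → Fin n // StrictMono s},
      (X.submatrix id s).det * (Y.submatrix s id).det := by
  classical
  set T : (Fin k → Fin n) → R := fun φ => (∏ i, X i (φ i)) * (Y.submatrix φ id).det
  have hT : ∀ φ, ¬ φ.Injective → T φ = 0 := fun φ hφ => by
    obtain ⟨a, b, hab, hne⟩ := Function.not_injective_iff.mp hφ
    have hrow : (Y.submatrix φ id) a = (Y.submatrix φ id) b := by ext j; simp [hab]
    simp only [T, det_zero_of_row_eq hne hrow, mul_zero]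
  have hperm : ∀ s : {s : Fin k → Fin n // StrictMono s}, ∑ σ : Equiv.Perm (Fin k),
      T (s.1 ∘ σ) = (X.submatrix id s).det * (Y.submatrix s id).det := by
    intro s
    rw [← det_transpose (X.submatrix id s), det_apply, Finset.sum_mul]
    refine Finset.sum_congr rfl fun σ _ => ?_
    have hY : (Y.submatrix (s.1 ∘ σ) id).det = σ.sign * (Y.submatrix s id).det := by
      rw [← det_permute]; rfl
    simp only [T, Function.comp_apply, hY, transpose_apply, submatrix_apply, id]
    rw [Units.smul_def, zsmul_eq_mul]
    ring
  rw [det_mul_eq_sum_prod_mul_det_submatrix,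
    ← Finset.sum_filter_of_ne fun φ _ h => not_not.1 (mt (hT φ) h),
    Finset.sum_subtype (p := Function.Injective) _ (fun φ => by simp),
    ← Fintype.sum_equiv (strictMonoProdPermEquiv k (Fin n)) (fun p => T (p.1.1 ∘ p.2)) _
      fun _ => rfl, Fintype.sum_prod_type]
  exact Finset.sum_congr rfl fun s _ => hperm s

theorem det_submatrix_mul {k l m n : ℕ} (X : Matrix (Fin l) (Fin m) R)
    (Y : Matrix (Fin m) (Fin n) R) (f : Fin k → Fin l) (g : Fin k → Fin n) :
    ((X * Y).submatrix f g).det = ∑ s : {s : Fin k → Fin m // StrictMono s},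
      (X.submatrix f s).det * (Y.submatrix s g).det := by
  have h : (X * Y).submatrix f g = X.submatrix f id * Y.submatrix id g := by
    ext i j
    simp [mul_apply]
  rw [h, det_mul_eq_sum_strictMono]
  rfl

theorem det_add_single_last_last {k : ℕ} (N : Matrix (Fin (k + 1)) (Fin (k + 1)) R) (δ : R) :
    (N + single (Fin.last k) (Fin.last k) δ).det =
      N.det + δ * (N.submatrix Fin.castSucc Fin.castSucc).det := by
  have hminor : ∀ j : Fin (k + 1),
      (N + single (Fin.last k) (Fin.last k) δ).submatrix (Fin.last k).succAbove j.succAbove =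
        N.submatrix (Fin.last k).succAbove j.succAbove := fun j => by
    ext a b
    simp [Fin.succAbove_last, (Fin.castSucc_lt_last a).ne']
  rw [det_succ_row _ (Fin.last k), det_succ_row N (Fin.last k)]
  simp_rw [hminor, add_apply, mul_add, add_mul, sum_add_distrib, add_right_inj]
  rw [Finset.sum_eq_single (Fin.last k) (fun j _ hj => by simp [Ne.symm hj]) (by simp),
    Fin.succAbove_last, Even.neg_one_pow ⟨_, rfl⟩]
  simp

end CommRing

theorem det_succ_eq_mul_det_schur {K : Type*} [Field K] {k : ℕ}
    (M : Matrix (Fin (k + 1)) (Fin (k + 1)) K) (h : M (Fin.last k) (Fin.last k) ≠ 0) :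
    M.det = M (Fin.last k) (Fin.last k) * (of fun i j : Fin k => M i.castSucc j.castSucc -
      M i.castSucc (Fin.last k) * M (Fin.last k) j.castSucc / M (Fin.last k) (Fin.last k)).det := by
  let c : Fin (k + 1) → K := fun i =>
    if i = Fin.last k then 0 else M i (Fin.last k) / M (Fin.last k) (Fin.last k)
  let B : Matrix (Fin (k + 1)) (Fin (k + 1)) K := of fun i j => M i j - c i * M (Fin.last k) j
  have hB : M.det = B.det :=
    det_eq_of_forall_row_eq_smul_add_const c (Fin.last k) (by simp [c]) fun i j => by
      by_cases hi : i = Fin.last k <;> simp [B, c, hi]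
  have hBcol : ∀ i, i ≠ Fin.last k → B i (Fin.last k) = 0 := fun i hi => by
    simp [B, c, hi, h]
  have hsub : B.submatrix Fin.castSucc Fin.castSucc = of fun i j : Fin k =>
      M i.castSucc j.castSucc -
        M i.castSucc (Fin.last k) * M (Fin.last k) j.castSucc / M (Fin.last k) (Fin.last k) := by
    ext i j
    simp [B, c, (Fin.castSucc_lt_last i).ne, div_mul_eq_mul_div]
  rw [hB, det_succ_column B (Fin.last k), Finset.sum_eq_single (Fin.last k)
    (fun i _ hi => by simp [hBcol i hi]) (by simp), Fin.succAbove_last, hsub,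
    Even.neg_one_pow ⟨_, rfl⟩, one_mul]
  simp [B, c]

theorem det_inv_add_pos {k : ℕ} (x y : Fin k → ℝ) (hx : StrictMono x) (hy : StrictMono y)
    (hxy : ∀ i j, 0 < x i + y j) : 0 < (of fun i j => (x i + y j)⁻¹).det := by
  induction k with
  | zero => simp
  | succ k ih =>
    have hxL (i : Fin k) : 0 < x (Fin.last k) - x i.castSucc :=
      sub_pos.2 (hx (Fin.castSucc_lt_last i))
    have hyL (j : Fin k) : 0 < y (Fin.last k) - y j.castSucc :=
      sub_pos.2 (hy (Fin.castSucc_lt_last j))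
    -- the Schur complement of the corner entry is again a Cauchy matrix, scaled on both sides
    have hschur : (of fun i j : Fin k => (x i.castSucc + y j.castSucc)⁻¹ -
          (x i.castSucc + y (Fin.last k))⁻¹ * (x (Fin.last k) + y j.castSucc)⁻¹ /
            (x (Fin.last k) + y (Fin.last k))⁻¹) =
        diagonal (fun i => (x (Fin.last k) - x i.castSucc) / (x i.castSucc + y (Fin.last k))) *
          (of fun i j => (x i.castSucc + y j.castSucc)⁻¹) *
          diagonal (fun j => (y (Fin.last k) - y j.castSucc) / (x (Fin.last k) + y j.castSucc)) := by
      ext i j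
      have := hxy i.castSucc j.castSucc
      have := hxy i.castSucc (Fin.last k)
      have := hxy (Fin.last k) j.castSucc
      have := hxy (Fin.last k) (Fin.last k)
      simp only [of_apply, mul_diagonal, diagonal_mul]
      field_simp
      ring
    rw [det_succ_eq_mul_det_schur _ (by simpa using (hxy _ _).ne')]
    simp only [of_apply]
    rw [hschur, det_mul, det_mul, det_diagonal, det_diagonal]
    refine mul_pos (inv_pos.2 (hxy _ _)) (mul_pos (mul_pos (prod_pos fun i _ => ?_) ?_)
      (prod_pos fun j _ => ?_))
    · exact div_pos (hxL i) (hxy _ _)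
    · exact ih _ _ (hx.comp Fin.strictMono_castSucc) (hy.comp Fin.strictMono_castSucc)
        fun i j => hxy _ _
    · exact div_pos (hyL j) (hxy _ _)

theorem det_inv_cosh_sub_pos {k : ℕ} (a b : Fin k → ℝ) (ha : StrictMono a) (hb : StrictMono b) :
    0 < (of fun i j => (cosh (a i - b j))⁻¹).det := by
  have h : (of fun i j => (cosh (a i - b j))⁻¹) = diagonal (fun i => 2 * exp (a i)) *
      (of fun i j => (exp (2 * a i) + exp (2 * b j))⁻¹) * diagonal (fun j => exp (b j)) := by
    ext i j
    simp only [of_apply, mul_diagonal, diagonal_mul, cosh_eq, neg_sub, exp_sub, two_mul, exp_add]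
    field_simp
    ring
  rw [h, det_mul, det_mul, det_diagonal, det_diagonal]
  have hexp2 : ∀ {c : Fin k → ℝ}, StrictMono c → StrictMono fun i => exp (2 * c i) :=
    fun hc _ _ hij => exp_lt_exp.2 (by linarith [hc hij])
  exact mul_pos (mul_pos (prod_pos fun i _ => by positivity)
    (det_inv_add_pos _ _ (hexp2 ha) (hexp2 hb) fun i j => by positivity))
    (prod_pos fun j _ => exp_pos _)

end Matrix

theorem exp_mul_abs_div_two_le_cosh_mul (s c : ℝ) : exp (s * |c|) / 2 ≤ cosh (s * c) := by
  rw [← cosh_abs, cosh_eq]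
  have h : exp (s * |c|) ≤ exp |s * c| := by
    rw [exp_le_exp, abs_mul]
    exact mul_le_mul_of_nonneg_right (le_abs_self s) (abs_nonneg c)
  linarith [exp_pos (-|s * c|)]

theorem tendsto_inv_cosh_mul_atTop {c : ℝ} (hc : c ≠ 0) :
    Tendsto (fun s => (cosh (s * c))⁻¹) atTop (𝓝 0) := by
  refine Tendsto.inv_tendsto_atTop (tendsto_atTop_mono (exp_mul_abs_div_two_le_cosh_mul · c) ?_)
  exact (tendsto_exp_atTop.comp (tendsto_id.atTop_mul_const (abs_pos.2 hc))).atTop_div_const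
    two_pos

theorem IsTPr.isTNr {m n r : ℕ} {A : Matrix (Fin m) (Fin n) ℝ} (h : IsTPr A r) : IsTNr A r :=
  fun k hk f g hf hg => (h k hk f g hf hg).le

theorem IsTNr.mono {m n r s : ℕ} {A : Matrix (Fin m) (Fin n) ℝ} (h : IsTNr A r) (hsr : s ≤ r) :
    IsTNr A s :=
  fun k hk => h k (hk.trans hsr)

theorem isTPr_zero {m n : ℕ} (A : Matrix (Fin m) (Fin n) ℝ) : IsTPr A 0 := by
  rintro k hk f g - -
  obtain rfl := Nat.le_zero.1 hk
  simp

theorem IsTNr.mul {l m n r : ℕ} {X : Matrix (Fin l) (Fin m) ℝ} {Y : Matrix (Fin m) (Fin n) ℝ}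
    (hX : IsTNr X r) (hY : IsTNr Y r) : IsTNr (X * Y) r := fun k hk f g hf hg => by
  rw [det_submatrix_mul]
  exact sum_nonneg fun s _ => mul_nonneg (hX k hk f s hf s.2) (hY k hk s g s.2 hg)

def HasPosMinor {m n : ℕ} (A : Matrix (Fin m) (Fin n) ℝ) (k : ℕ) : Prop :=
  ∃ (u : Fin k → Fin m) (v : Fin k → Fin n), StrictMono u ∧ StrictMono v ∧
    0 < (A.submatrix u v).det

theorem IsTPr.mul_mul {n r : ℕ} {X Y Z : Matrix (Fin n) (Fin n) ℝ} (hX : IsTPr X r)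
    (hY : IsTNr Y r) (hZ : IsTPr Z r) (hpos : ∀ k ≤ r, k ≤ n → HasPosMinor Y k) :
    IsTPr (X * Y * Z) r := by
  intro k hk f g hf hg
  obtain ⟨u, v, hu, hv, huv⟩ := hpos k hk (Fin.le_of_injective f hf.injective)
  have hXY : 0 < ((X * Y).submatrix f v).det := by
    rw [det_submatrix_mul]
    exact sum_pos' (fun s _ => mul_nonneg (hX k hk f s hf s.2).le (hY k hk s v s.2 hv))
      ⟨⟨u, hu⟩, mem_univ _, mul_pos (hX k hk f u hf hu) huv⟩
  rw [det_submatrix_mul]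
  exact sum_pos' (fun s _ => mul_nonneg (hX.isTNr.mul hY k hk f s hf s.2) (hZ k hk s g s.2 hg).le)
    ⟨⟨v, hv⟩, mem_univ _, mul_pos hXY (hZ k hk v g hv hg)⟩

noncomputable def sechMatrix (n : ℕ) (s : ℝ) : Matrix (Fin n) (Fin n) ℝ :=
  of fun i j => (cosh (s * (((i : ℕ) : ℝ) - ((j : ℕ) : ℝ))))⁻¹

theorem isTPr_sechMatrix {n : ℕ} {s : ℝ} (hs : 0 < s) (r : ℕ) : IsTPr (sechMatrix n s) r := by
  intro k _ f g hf hg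
  have hmono : ∀ {h : Fin k → Fin n}, StrictMono h → StrictMono fun i => s * ((h i : ℕ) : ℝ) :=
    fun hh _ _ hab => mul_lt_mul_of_pos_left (Nat.cast_lt.2 (hh hab)) hs
  have hsub : (sechMatrix n s).submatrix f g =
      of fun i j => (cosh (s * ((f i : ℕ) : ℝ) - s * ((g j : ℕ) : ℝ)))⁻¹ := by
    ext i j
    simp [sechMatrix, mul_sub]
  rw [hsub]
  exact det_inv_cosh_sub_pos _ _ (hmono hf) (hmono hg)

theorem isSymm_sechMatrix (n : ℕ) (s : ℝ) : (sechMatrix n s).IsSymm := by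
  ext i j
  simp only [sechMatrix, transpose_apply, of_apply]
  rw [← cosh_neg]
  ring_nf

theorem tendsto_sechMatrix_atTop (n : ℕ) : Tendsto (sechMatrix n) atTop (𝓝 1) := by
  refine tendsto_pi_nhds.2 fun i => tendsto_pi_nhds.2 fun j => ?_
  by_cases hij : i = j
  · subst hij
    simp [sechMatrix]
  · have hc : ((i : ℕ) : ℝ) - ((j : ℕ) : ℝ) ≠ 0 :=
      sub_ne_zero.2 (Nat.cast_injective.ne (Fin.val_injective.ne hij))
    simpa [sechMatrix, one_apply_ne hij] using tendsto_inv_cosh_mul_atTop hc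

theorem exists_isSymm_isTPr_near_of_hasPosMinor {n r K : ℕ} {C : Matrix (Fin n) (Fin n) ℝ}
    (hsym : C.IsSymm) (hC : IsTNr C r) (hKr : K ≤ r) (hpos : ∀ k ≤ K, k ≤ n → HasPosMinor C k)
    {ε : ℝ} (hε : 0 < ε) :
    ∃ M : Matrix (Fin n) (Fin n) ℝ, M.IsSymm ∧ IsTNr M r ∧ IsTPr M K ∧
      ∀ i j, |C i j - M i j| < ε := by
  have hlim : Tendsto (fun s => sechMatrix n s * C * sechMatrix n s) atTop (𝓝 C) := by
    simpa using
      ((tendsto_sechMatrix_atTop n).mul tendsto_const_nhds).mul (tendsto_sechMatrix_atTop n)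
  have hnear : ∀ᶠ s in atTop, ∀ i j, |C i j - (sechMatrix n s * C * sechMatrix n s) i j| < ε :=
    eventually_all.2 fun i => eventually_all.2 fun j => by
      simpa [Real.dist_eq, abs_sub_comm] using
        Metric.tendsto_nhds.1 (tendsto_pi_nhds.1 (tendsto_pi_nhds.1 hlim i) j) ε hε
  obtain ⟨s, hs, hnear⟩ := ((eventually_gt_atTop 0).and hnear).exists
  have hG := isTPr_sechMatrix (n := n) hs
  refine ⟨_, ?_, ((hG r).isTNr.mul hC).mul (hG r).isTNr,
    (hG K).mul_mul (hC.mono hKr) (hG K) hpos, hnear⟩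
  rw [IsSymm, transpose_mul, transpose_mul, (isSymm_sechMatrix n s).eq, hsym.eq, Matrix.mul_assoc]

section CornerBump

variable {m k : ℕ} {α : Type*} [Zero α]

theorem submatrix_single_last_last_of_apply_last {f g : Fin (k + 1) → Fin (m + 1)}
    (hf : f.Injective) (hg : g.Injective) (hfl : f (Fin.last k) = Fin.last m)
    (hgl : g (Fin.last k) = Fin.last m) (δ : α) :
    (single (Fin.last m) (Fin.last m) δ).submatrix f g = single (Fin.last k) (Fin.last k) δ := by
  have hfi (i : Fin (k + 1)) : Fin.last m = f i ↔ Fin.last k = i := by rw [← hfl, hf.eq_iff]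
  have hgj (j : Fin (k + 1)) : Fin.last m = g j ↔ Fin.last k = j := by rw [← hgl, hg.eq_iff]
  ext i j
  simp only [submatrix_apply, single_apply, hfi, hgj]

theorem submatrix_single_last_last_of_not_apply_last {f g : Fin (k + 1) → Fin (m + 1)}
    (hf : StrictMono f) (hg : StrictMono g)
    (h : ¬(f (Fin.last k) = Fin.last m ∧ g (Fin.last k) = Fin.last m)) (δ : α) :
    (single (Fin.last m) (Fin.last m) δ).submatrix f g = 0 := by
  have hlast : ∀ {h : Fin (k + 1) → Fin (m + 1)}, StrictMono h → ∀ i, h i = Fin.last m →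
      h (Fin.last k) = Fin.last m := fun hh i hi =>
    le_antisymm (Fin.le_last _) (hi ▸ hh.monotone (Fin.le_last i))
  ext i j
  simp only [submatrix_apply, single_apply, Matrix.zero_apply, ite_eq_right_iff, and_imp]
  exact fun hi hj => (h ⟨hlast hf i hi.symm, hlast hg j hj.symm⟩).elim

theorem det_submatrix_le_det_submatrix_add_single_last {r : ℕ}
    {M : Matrix (Fin (m + 1)) (Fin (m + 1)) ℝ} (hM : IsTNr M r) {δ : ℝ} (hδ : 0 ≤ δ) {j : ℕ}
    (hj : j ≤ r) {f g : Fin j → Fin (m + 1)} (hf : StrictMono f) (hg : StrictMono g) :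
    (M.submatrix f g).det ≤ ((M + single (Fin.last m) (Fin.last m) δ).submatrix f g).det := by
  rw [submatrix_add, Pi.add_apply, Pi.add_apply]
  cases j with
  | zero => simp
  | succ j =>
    by_cases hlast : f (Fin.last j) = Fin.last m ∧ g (Fin.last j) = Fin.last m
    · rw [submatrix_single_last_last_of_apply_last hf.injective hg.injective hlast.1 hlast.2,
        det_add_single_last_last, submatrix_submatrix]
      exact le_add_of_nonneg_right (mul_nonneg hδ (hM j (by omega) _ _
        (hf.comp Fin.strictMono_castSucc) (hg.comp Fin.strictMono_castSucc)))
    · rw [submatrix_single_last_last_of_not_apply_last hf hg hlast, add_zero]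

theorem IsTNr.add_single_last {r : ℕ} {M : Matrix (Fin (m + 1)) (Fin (m + 1)) ℝ}
    (hM : IsTNr M r) {δ : ℝ} (hδ : 0 ≤ δ) : IsTNr (M + single (Fin.last m) (Fin.last m) δ) r :=
  fun _ hj _ _ hf hg =>
    (hM _ hj _ _ hf hg).trans (det_submatrix_le_det_submatrix_add_single_last hM hδ hj hf hg)

end CornerBump

theorem exists_isSymm_isTPr_succ_near {m r k : ℕ} {M : Matrix (Fin (m + 1)) (Fin (m + 1)) ℝ}
    (hsym : M.IsSymm) (hTN : IsTNr M r) (hTP : IsTPr M k) (hkr : k < r) {ε : ℝ} (hε : 0 < ε) :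
    ∃ B : Matrix (Fin (m + 1)) (Fin (m + 1)) ℝ, B.IsSymm ∧ IsTNr B r ∧ IsTPr B (k + 1) ∧
      ∀ i j, |M i j - B i j| < ε := by
  set C := M + single (Fin.last m) (Fin.last m) (ε / 2)
  have hCsym : C.IsSymm := hsym.add (by simp [IsSymm, transpose_single])
  have hCpos : ∀ j ≤ k + 1, j ≤ m + 1 → HasPosMinor C j := by
    intro j hj hjm
    rcases hj.lt_or_eq with hj | rfl
    · have hι := Fin.strictMono_castLE hjm
      exact ⟨_, _, hι, hι, (hTP j (by omega) _ _ hι hι).trans_le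
        (det_submatrix_le_det_submatrix_add_single_last hTN (half_pos hε).le (by omega) hι hι)⟩
    · -- on rows and columns `m - k, …, m` the bump adds `ε / 2` times a positive `k`-minor
      let S : Fin (k + 1) → Fin (m + 1) := fun i => ⟨i + (m - k), by omega⟩
      have hS : StrictMono S := fun a b hab => Fin.mk_lt_mk.2 (by simpa using hab)
      have hSlast : S (Fin.last k) = Fin.last m := Fin.ext (by simp [S]; omega)
      refine ⟨S, S, hS, hS, ?_⟩
      rw [submatrix_add, Pi.add_apply, Pi.add_apply, submatrix_single_last_last_of_apply_last hS.injective hS.injective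
        hSlast hSlast, det_add_single_last_last, submatrix_submatrix]
      exact add_pos_of_nonneg_of_pos (hTN _ hkr S S hS hS) (mul_pos (half_pos hε)
        (hTP k le_rfl _ _ (hS.comp Fin.strictMono_castSucc) (hS.comp Fin.strictMono_castSucc)))
  obtain ⟨B, hBsym, hBTN, hBTP, hCB⟩ := exists_isSymm_isTPr_near_of_hasPosMinor hCsym
    (hTN.add_single_last (half_pos hε).le) hkr hCpos (half_pos hε)
  refine ⟨B, hBsym, hBTN, hBTP, fun i j => ?_⟩
  have hMC : |M i j - C i j| ≤ ε / 2 := by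
    simp only [C, Matrix.add_apply, sub_add_cancel_left, abs_neg, single_apply]
    split_ifs <;> simp [abs_of_pos (half_pos hε), (half_pos hε).le]
  exact (abs_sub_le _ _ _).trans_lt ((add_lt_add_of_le_of_lt hMC (hCB i j)).trans_eq (add_halves ε))

theorem exists_isSymm_isTPr_near {m r k : ℕ} {A : Matrix (Fin (m + 1)) (Fin (m + 1)) ℝ}
    (hsym : A.IsSymm) (hA : IsTNr A r) (hk : k ≤ r) {ε : ℝ} (hε : 0 < ε) :
    ∃ B : Matrix (Fin (m + 1)) (Fin (m + 1)) ℝ, B.IsSymm ∧ IsTNr B r ∧ IsTPr B k ∧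
      ∀ i j, |A i j - B i j| < ε := by
  induction k generalizing ε with
  | zero => exact ⟨A, hsym, hA, isTPr_zero A, fun i j => by simpa using hε⟩
  | succ k ih =>
    obtain ⟨M, hMsym, hMTN, hMTP, hAM⟩ := ih (by omega) (half_pos hε)
    obtain ⟨B, hBsym, hBTN, hBTP, hMB⟩ :=
      exists_isSymm_isTPr_succ_near hMsym hMTN hMTP (by omega) (half_pos hε)
    exact ⟨B, hBsym, hBTN, hBTP, fun i j => (abs_sub_le _ _ _).trans_lt
      ((add_lt_add (hAM i j) (hMB i j)).trans_eq (add_halves ε))⟩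

theorem symm_TPr_dense_in_symm_TNr_general {n : ℕ} (hn : 1 ≤ n) (r : ℕ)
    (A : Matrix (Fin n) (Fin n) ℝ) (hsym : A.IsSymm) (hA : IsTNr A r)
    (ε : ℝ) (hε : 0 < ε) :
    ∃ B : Matrix (Fin n) (Fin n) ℝ, B.IsSymm ∧ IsTPr B r ∧ ∀ i j, |A i j - B i j| < ε := by
  obtain ⟨m, rfl⟩ : ∃ m, n = m + 1 := ⟨n - 1, by omega⟩
  obtain ⟨B, hBsym, -, hBTP, hAB⟩ := exists_isSymm_isTPr_near hsym hA le_rfl hε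
  exact ⟨B, hBsym, hBTP, hAB⟩

/-- The symmetric TP_r matrices are dense in the symmetric TN_r matrices. -/
theorem symm_TPr_dense_in_symm_TNr {n : ℕ} (hn : 1 ≤ n)
    (r : ℕ) (hr1 : 1 ≤ r) (hr : r ≤ n)
    (A : Matrix (Fin n) (Fin n) ℝ) (hsym : A.IsSymm) (hA : IsTNr A r)
    (ε : ℝ) (hε : 0 < ε) :
    ∃ B : Matrix (Fin n) (Fin n) ℝ, B.IsSymm ∧ IsTPr B r ∧ ∀ i j, |A i j - B i j| < ε :=
  symm_TPr_dense_in_symm_TNr_general hn r A hsym hA ε hε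
end

section
/- Let A and B be m-by-n real matrices. (a) If A and B are both TN_2, then the Hadamard product A ∘ B is TN_2. (b) If A is TP_2 and B is TP_1 and TN_2, then A ∘ B is TP_2. -/
/-!
For a `2 × 2` matrix with nonnegative entries, total nonnegativity says that the diagonal product
dominates the off-diagonal one. The diagonal and off-diagonal products of `A ∘ B` are the products
of those of `A` and `B`, and an inequality between nonnegative reals survives multiplication by
another one; it stays strict when one factor is strict and the other has a positive smaller side.
-/

open Matrix

lemma det_hadamard_fin_two_nonneg {M N : Matrix (Fin 2) (Fin 2) ℝ}
    (hM : ∀ i j, 0 ≤ M i j) (hN : ∀ i j, 0 ≤ N i j) (hMdet : 0 ≤ M.det) (hNdet : 0 ≤ N.det) :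
    0 ≤ (M ⊙ N).det := by
  rw [det_fin_two] at hMdet hNdet ⊢
  have h : M 0 1 * M 1 0 * (N 0 1 * N 1 0) ≤ M 0 0 * M 1 1 * (N 0 0 * N 1 1) :=
    mul_le_mul (by linarith) (by linarith) (mul_nonneg (hN 0 1) (hN 1 0))
      (mul_nonneg (hM 0 0) (hM 1 1))
  simp only [hadamard_apply]
  linarith

lemma det_hadamard_fin_two_pos {M N : Matrix (Fin 2) (Fin 2) ℝ}
    (hM : ∀ i j, 0 ≤ M i j) (hN : ∀ i j, 0 < N i j) (hMdet : 0 < M.det) (hNdet : 0 ≤ N.det) :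
    0 < (M ⊙ N).det := by
  rw [det_fin_two] at hMdet hNdet ⊢
  have h : M 0 1 * M 1 0 * (N 0 1 * N 1 0) < M 0 0 * M 1 1 * (N 0 0 * N 1 1) :=
    mul_lt_mul (by linarith) (by linarith) (mul_pos (hN 0 1) (hN 1 0))
      (mul_nonneg (hM 0 0) (hM 1 1))
  simp only [hadamard_apply]
  linarith

section

variable {m n r : ℕ} {A : Matrix (Fin m) (Fin n) ℝ}

lemma IsTNr.entry_nonneg (hA : IsTNr A r) (hr : 1 ≤ r) (i : Fin m) (j : Fin n) : 0 ≤ A i j := by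
  simpa [det_fin_one] using
    hA 1 hr (fun _ => i) (fun _ => j) (Subsingleton.strictMono _) (Subsingleton.strictMono _)

lemma IsTPr.entry_pos (hA : IsTPr A r) (hr : 1 ≤ r) (i : Fin m) (j : Fin n) : 0 < A i j := by
  simpa [det_fin_one] using
    hA 1 hr (fun _ => i) (fun _ => j) (Subsingleton.strictMono _) (Subsingleton.strictMono _)

lemma isTNr_two_of_forall_fin_two (hA : ∀ i j, 0 ≤ A i j)
    (hA2 : ∀ (f : Fin 2 → Fin m) (g : Fin 2 → Fin n), StrictMono f → StrictMono g →
      0 ≤ (A.submatrix f g).det) :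
    IsTNr A 2 := by
  intro k hk f g hf hg
  interval_cases k
  · simp
  · simpa using hA (f 0) (g 0)
  · exact hA2 f g hf hg

lemma isTPr_two_of_forall_fin_two (hA : ∀ i j, 0 < A i j)
    (hA2 : ∀ (f : Fin 2 → Fin m) (g : Fin 2 → Fin n), StrictMono f → StrictMono g →
      0 < (A.submatrix f g).det) :
    IsTPr A 2 := by
  intro k hk f g hf hg
  interval_cases k
  · simp
  · simpa using hA (f 0) (g 0)
  · exact hA2 f g hf hg

end

/-- Lemma 4.1. (a) The Hadamard product of two TN_2 matrices is TN_2.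
(b) The Hadamard product of a TP_2 matrix with a TP_1 ∩ TN_2 matrix is TP_2. -/
theorem hadamard_product_TN2_TP2 {m n : ℕ} (A B : Matrix (Fin m) (Fin n) ℝ) :
    (IsTNr A 2 → IsTNr B 2 → IsTNr (Matrix.hadamard A B) 2) ∧
    (IsTPr A 2 → IsTPr B 1 → IsTNr B 2 → IsTPr (Matrix.hadamard A B) 2) := by
  constructor
  · intro hA hB
    have hA₀ := hA.entry_nonneg one_le_two
    have hB₀ := hB.entry_nonneg one_le_two
    refine isTNr_two_of_forall_fin_two (fun i j => mul_nonneg (hA₀ i j) (hB₀ i j))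
      fun f g hf hg => ?_
    rw [submatrix_hadamard]
    exact det_hadamard_fin_two_nonneg (fun _ _ => hA₀ _ _) (fun _ _ => hB₀ _ _)
      (hA 2 le_rfl f g hf hg) (hB 2 le_rfl f g hf hg)
  · intro hA hB₁ hB
    have hA₀ := hA.entry_pos one_le_two
    have hB₀ := hB₁.entry_pos le_rfl
    refine isTPr_two_of_forall_fin_two (fun i j => mul_pos (hA₀ i j) (hB₀ i j))
      fun f g hf hg => ?_
    rw [submatrix_hadamard]
    exact det_hadamard_fin_two_pos (fun _ _ => (hA₀ _ _).le) (fun _ _ => hB₀ _ _)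
      (hA 2 le_rfl f g hf hg) (hB 2 le_rfl f g hf hg)
end

section
/- Let n ≥ 2, and let A be an n-by-n symmetric positive semidefinite (resp. positive definite) real matrix with nonnegative entries. Then for every real number t ≥ n − 2 (t > 0 if n = 2), the Hadamard power A^{∘t} is positive semidefinite (resp. positive definite). -/
/-!
The positive semidefinite case goes by induction on `n` (FitzGerald–Horn). Split off the last
column: `A = ξ ξᵀ + B` with `ξ = A_{·n} / √a_{nn}`, where `B` is positive semidefinite with
vanishing last row and column. For `t ≥ 1`,
`A^{∘t} = ξ^{∘t} (ξ^{∘t})ᵀ + t ∫₀¹ B ∘ (ξ ξᵀ + s B)^{∘(t-1)} ds`,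
and since `B` only lives on the leading `(n-1)`-block, the integrand is positive semidefinite by
the Schur product theorem and the induction hypothesis applied (with exponent `t - 1`) to the
leading block of the nonnegative positive semidefinite matrix `ξ ξᵀ + s B = (1 - s) ξ ξᵀ + s A`.
Dimension two is checked through the determinant.

If `A` is positive definite, then `A - εI` is positive semidefinite and nonnegative for some
`ε > 0`, and `A^{∘t} = (A - εI)^{∘t} + diag(a_{ii}^t - (a_{ii} - ε)^t)` with a positive diagonal.
-/

open Matrix

namespace Matrix

variable {ι : Type*}

theorem PosSemidef.apply_mul_apply_le {A : Matrix ι ι ℝ} (hA : A.PosSemidef) (i j : ι) :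
    A i j * A i j ≤ A i i * A j j := by
  have hdet := (hA.submatrix ![i, j]).det_nonneg
  have hji : A j i = A i j := by simpa using hA.isHermitian.apply i j
  rw [det_fin_two] at hdet
  simp only [submatrix_apply, cons_val_zero, cons_val_one, cons_val_fin_one, hji,
    sub_nonneg] at hdet
  exact hdet

theorem PosSemidef.dotProduct_mulVec_sq_le [Fintype ι] {A : Matrix ι ι ℝ} (hA : A.PosSemidef)
    (x y : ι → ℝ) : (x ⬝ᵥ A *ᵥ y) ^ 2 ≤ (x ⬝ᵥ A *ᵥ x) * (y ⬝ᵥ A *ᵥ y) := by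
  have hgram := (hA.mul_mul_conjTranspose_same (of ![x, y])).apply_mul_apply_le 0 1
  have gram (k l : Fin 2) :
      (of ![x, y] * A * (of ![x, y])ᴴ) k l = ![x, y] k ⬝ᵥ A *ᵥ ![x, y] l := by
    rw [Matrix.mul_assoc]
    simp only [mul_apply, conjTranspose_apply, star_trivial, dotProduct, mulVec, of_apply,
      Finset.mul_sum]
  simp only [gram] at hgram
  rwa [sq]

theorem dotProduct_mulVec_eq_sum [Fintype ι] {R : Type*} [NonUnitalSemiring R]
    (M : Matrix ι ι R) (x : ι → R) : x ⬝ᵥ M *ᵥ x = ∑ i, ∑ j, x i * M i j * x j := by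
  simp [dotProduct, mulVec, Finset.mul_sum, mul_assoc]

theorem posSemidef_fin_two_of_det_nonneg {M : Matrix (Fin 2) (Fin 2) ℝ} (hM : M.IsHermitian)
    (h00 : 0 ≤ M 0 0) (h11 : 0 ≤ M 1 1) (hdet : 0 ≤ M.det) : M.PosSemidef := by
  have h10 : M 1 0 = M 0 1 := by simpa using hM.apply 0 1
  rw [det_fin_two, h10] at hdet
  refine .of_dotProduct_mulVec_nonneg hM fun x => ?_
  rw [star_trivial, dotProduct_mulVec_eq_sum]
  simp only [Fin.sum_univ_two, h10]
  set q := x 0 * M 0 0 * x 0 + x 0 * M 0 1 * x 1 + (x 1 * M 0 1 * x 0 + x 1 * M 1 1 * x 1)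
  have key : (M 0 0 + M 1 1) * q = (M 0 0 * x 0 + M 0 1 * x 1) ^ 2
      + (M 0 1 * x 0 + M 1 1 * x 1) ^ 2 + (M 0 0 * M 1 1 - M 0 1 * M 0 1) * (x 0 ^ 2 + x 1 ^ 2) := by
    ring
  rcases (add_nonneg h00 h11).eq_or_lt with htr | htr
  · have h0' : M 0 0 = 0 := by linarith
    have h1' : M 1 1 = 0 := by linarith
    have hb : M 0 1 = 0 := by nlinarith
    simp [q, h0', h1', hb]
  · refine nonneg_of_mul_nonneg_right ?_ htr
    rw [key]
    positivity

theorem PosSemidef.of_submatrix_castSucc {R : Type*} [CommRing R] [PartialOrder R] [StarRing R]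
    {m : ℕ} {M : Matrix (Fin (m + 1)) (Fin (m + 1)) R} (hM : M.IsHermitian)
    (hlast : ∀ i, M i (Fin.last m) = 0)
    (h : (M.submatrix Fin.castSucc Fin.castSucc).PosSemidef) : M.PosSemidef := by
  have hlast' (j) : M (Fin.last m) j = 0 := by
    rw [← hM.apply, hlast, star_zero]
  refine .of_dotProduct_mulVec_nonneg hM fun x => ?_
  convert h.dotProduct_mulVec_nonneg (x ∘ Fin.castSucc) using 1
  simp [dotProduct, mulVec, Fin.sum_univ_castSucc, hlast, hlast']

/-- This is `0` when `A k k = 0` (division by zero); for positive semidefinite `A` the `k`-th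
column then vanishes anyway, so no case split is needed downstream. -/
noncomputable def pivotCol (A : Matrix ι ι ℝ) (k : ι) : ι → ℝ := fun i => A i k / √(A k k)

theorem pivotCol_mul_pivotCol {A : Matrix ι ι ℝ} {k : ι} (hk : 0 ≤ A k k) (i j : ι) :
    pivotCol A k i * pivotCol A k j = A i k * A j k / A k k := by
  rw [pivotCol, pivotCol, div_mul_div_comm, Real.mul_self_sqrt hk]

theorem PosSemidef.sub_vecMulVec_pivotCol_apply_self {A : Matrix ι ι ℝ} (hA : A.PosSemidef)
    (i k : ι) : (A - vecMulVec (pivotCol A k) (pivotCol A k)) i k = 0 := by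
  rw [sub_apply, vecMulVec_apply, pivotCol_mul_pivotCol hA.diag_nonneg]
  rcases eq_or_ne (A k k) 0 with hk | hk
  · have hik := hA.apply_mul_apply_le i k
    rw [hk, mul_zero] at hik
    simp [mul_self_eq_zero.mp (le_antisymm hik (mul_self_nonneg _))]
  · rw [mul_div_assoc, div_self hk, mul_one, sub_self]

theorem PosSemidef.posSemidef_sub_vecMulVec_pivotCol [Fintype ι] [DecidableEq ι]
    {A : Matrix ι ι ℝ} (hA : A.PosSemidef) (k : ι) :
    (A - vecMulVec (pivotCol A k) (pivotCol A k)).PosSemidef := by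
  have hP := posSemidef_vecMulVec_self_star (pivotCol A k)
  rw [star_trivial] at hP
  refine .of_dotProduct_mulVec_nonneg (hA.isHermitian.sub hP.isHermitian) fun x => ?_
  have hkk : Pi.single k 1 ⬝ᵥ A *ᵥ Pi.single k 1 = A k k := by simp
  have hCS := hA.dotProduct_mulVec_sq_le x (Pi.single k 1)
  rw [hkk] at hCS
  have hx : x ⬝ᵥ pivotCol A k = x ⬝ᵥ A *ᵥ Pi.single k 1 / √(A k k) := by
    simp [pivotCol, dotProduct, Finset.sum_div, mul_div_assoc]
  have hsq : (x ⬝ᵥ pivotCol A k) ^ 2 ≤ x ⬝ᵥ A *ᵥ x := by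
    rw [hx, div_pow, Real.sq_sqrt hA.diag_nonneg]
    exact div_le_of_le_mul₀ hA.diag_nonneg (by simpa using hA.dotProduct_mulVec_nonneg x) hCS
  simp only [star_trivial, sub_mulVec, dotProduct_sub, vecMulVec_mulVec]
  simp only [sq, dotProduct_comm, op_smul_eq_smul, dotProduct_smul, smul_eq_mul,
    sub_nonneg] at hsq ⊢
  exact hsq

open scoped MatrixOrder in
theorem PosDef.exists_pos_posSemidef_sub_smul_one [Fintype ι] [DecidableEq ι]
    {A : Matrix ι ι ℝ} (hA : A.PosDef) : ∃ ε : ℝ, 0 < ε ∧ (A - ε • 1).PosSemidef := by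
  cases isEmpty_or_nonempty ι
  · exact ⟨1, one_pos, Subsingleton.elim (A - (1 : ℝ) • 1) 0 ▸ .zero⟩
  obtain ⟨ε, hε, hle⟩ := (CFC.exists_pos_algebraMap_le_iff hA.isHermitian.isSelfAdjoint).mpr
    ((StarOrderedRing.isStrictlyPositive_iff_spectrum_pos A).mp hA.isStrictlyPositive)
  exact ⟨ε, hε, by simpa [Matrix.le_iff, Algebra.algebraMap_eq_smul_one] using hle⟩

end Matrix

theorem rpow_add_sub_rpow_eq_integral {t : ℝ} (ht : 1 ≤ t) (p b : ℝ) :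
    (p + b) ^ t - p ^ t = ∫ s in (0 : ℝ)..1, t * b * (p + s * b) ^ (t - 1) := by
  have hderiv (s : ℝ) :
      HasDerivAt (fun s => (p + s * b) ^ t) (t * b * (p + s * b) ^ (t - 1)) s := by
    have hlin : HasDerivAt (fun s => p + s * b) b s := by
      simpa using ((hasDerivAt_id s).mul_const b).const_add p
    convert hlin.rpow_const (Or.inr ht) using 1
    ring
  have hcont : Continuous fun s : ℝ => t * b * (p + s * b) ^ (t - 1) :=
    continuous_const.mul ((by fun_prop : Continuous fun s : ℝ => p + s * b).rpow_const
      fun _ => Or.inr (by linarith))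
  rw [intervalIntegral.integral_eq_sub_of_hasDerivAt (fun s _ => hderiv s)
    (hcont.intervalIntegrable 0 1)]
  simp

theorem hadPow_isHermitian {n : ℕ} {A : Matrix (Fin n) (Fin n) ℝ} (hA : A.IsHermitian) (t : ℝ) :
    (hadPow A t).IsHermitian :=
  hA.map (· ^ t) fun _ => rfl

theorem hadPow_submatrix {m n : ℕ} (A : Matrix (Fin n) (Fin n) ℝ) (f g : Fin m → Fin n)
    (t : ℝ) : hadPow (A.submatrix f g) t = (hadPow A t).submatrix f g :=
  rfl

theorem hadPow_vecMulVec {m n : ℕ} {u : Fin m → ℝ} {v : Fin n → ℝ} (hu : 0 ≤ u) (hv : 0 ≤ v)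
    (t : ℝ) : hadPow (vecMulVec u v) t = vecMulVec (fun i => u i ^ t) (fun j => v j ^ t) := by
  ext i j
  exact Real.mul_rpow (hu i) (hv j)

theorem dotProduct_hadPow_add_mulVec {n : ℕ} (P B : Matrix (Fin n) (Fin n) ℝ) {t : ℝ}
    (ht : 1 ≤ t) (x : Fin n → ℝ) :
    x ⬝ᵥ hadPow (P + B) t *ᵥ x = x ⬝ᵥ hadPow P t *ᵥ x +
      ∫ s in (0 : ℝ)..1, t * (x ⬝ᵥ (B ⊙ hadPow (P + s • B) (t - 1)) *ᵥ x) := by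
  have hcont (i j : Fin n) :
      Continuous fun s : ℝ => x i * (t * B i j * (P i j + s * B i j) ^ (t - 1)) * x j := by
    have : Continuous fun s : ℝ => (P i j + s * B i j) ^ (t - 1) :=
      (by fun_prop : Continuous fun s : ℝ => P i j + s * B i j).rpow_const
        fun _ => Or.inr (by linarith)
    fun_prop
  rw [← sub_eq_iff_eq_add']
  calc x ⬝ᵥ hadPow (P + B) t *ᵥ x - x ⬝ᵥ hadPow P t *ᵥ x
      = ∑ i, ∑ j, x i * ((P i j + B i j) ^ t - P i j ^ t) * x j := by
        simp only [dotProduct_mulVec_eq_sum, ← Finset.sum_sub_distrib, hadPow, of_apply,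
          Matrix.add_apply, mul_sub, sub_mul]
    _ = ∑ i, ∑ j, ∫ s in (0 : ℝ)..1, x i * (t * B i j * (P i j + s * B i j) ^ (t - 1)) * x j := by
        simp only [rpow_add_sub_rpow_eq_integral ht, intervalIntegral.integral_const_mul,
          intervalIntegral.integral_mul_const]
    _ = ∫ s in (0 : ℝ)..1, ∑ i, ∑ j, x i * (t * B i j * (P i j + s * B i j) ^ (t - 1)) * x j := by
        rw [intervalIntegral.integral_finsetSum fun i _ =>
          (continuous_finsetSum _ fun j _ => hcont i j).intervalIntegrable 0 1]
        congr! with i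
        rw [intervalIntegral.integral_finsetSum fun j _ => (hcont i j).intervalIntegrable 0 1]
    _ = ∫ s in (0 : ℝ)..1, t * (x ⬝ᵥ (B ⊙ hadPow (P + s • B) (t - 1)) *ᵥ x) := by
        simp only [dotProduct_mulVec_eq_sum, Finset.mul_sum, hadamard_apply, hadPow, of_apply,
          Matrix.add_apply, Matrix.smul_apply, smul_eq_mul]
        congr! 4
        ring

theorem posSemidef_hadPow_add {n : ℕ} {P B : Matrix (Fin n) (Fin n) ℝ} {t : ℝ} (ht : 1 ≤ t)
    (hP : (hadPow P t).PosSemidef) (hPB : (P + B).IsHermitian)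
    (hB : ∀ s ∈ Set.Icc (0 : ℝ) 1, (B ⊙ hadPow (P + s • B) (t - 1)).PosSemidef) :
    (hadPow (P + B) t).PosSemidef := by
  refine .of_dotProduct_mulVec_nonneg (hadPow_isHermitian hPB t) fun x => ?_
  rw [star_trivial, dotProduct_hadPow_add_mulVec P B ht]
  have hint : 0 ≤ ∫ s in (0 : ℝ)..1, t * (x ⬝ᵥ (B ⊙ hadPow (P + s • B) (t - 1)) *ᵥ x) :=
    intervalIntegral.integral_nonneg zero_le_one fun s hs =>
      mul_nonneg (by linarith) (by simpa using (hB s hs).dotProduct_mulVec_nonneg x)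
  have hPx : 0 ≤ x ⬝ᵥ hadPow P t *ᵥ x := by simpa using hP.dotProduct_mulVec_nonneg x
  exact add_nonneg hPx hint

theorem posSemidef_hadPow_succ {m : ℕ} {t : ℝ} (ht : 1 ≤ t)
    (ih : ∀ C : Matrix (Fin m) (Fin m) ℝ, C.PosSemidef → (∀ i j, 0 ≤ C i j) →
      (hadPow C (t - 1)).PosSemidef)
    {A : Matrix (Fin (m + 1)) (Fin (m + 1)) ℝ} (hA : A.PosSemidef) (h0 : ∀ i j, 0 ≤ A i j) :
    (hadPow A t).PosSemidef := by
  set ξ := pivotCol A (Fin.last m)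
  set P := vecMulVec ξ ξ
  set B := A - P
  have hξ : 0 ≤ ξ := fun i => div_nonneg (h0 _ _) (Real.sqrt_nonneg _)
  have hP : P.PosSemidef := by simpa using posSemidef_vecMulVec_self_star ξ
  have hB : B.PosSemidef := hA.posSemidef_sub_vecMulVec_pivotCol _
  have hAPB : A = P + B := (add_sub_cancel _ _).symm
  rw [hAPB]
  refine posSemidef_hadPow_add ht ?_ (hAPB ▸ hA.isHermitian) fun s hs => ?_
  · rw [hadPow_vecMulVec hξ hξ]
    simpa using posSemidef_vecMulVec_self_star fun i => ξ i ^ t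
  have hC : P + s • B = (1 - s) • P + s • A := by
    rw [hAPB]
    module
  have hCpsd : (P + s • B).PosSemidef :=
    hC ▸ (hP.smul (sub_nonneg.mpr hs.2)).add (hA.smul hs.1)
  have hC0 (i j) : 0 ≤ (P + s • B) i j := by
    rw [hC]
    exact add_nonneg (mul_nonneg (sub_nonneg.mpr hs.2) (mul_nonneg (hξ i) (hξ j)))
      (mul_nonneg hs.1 (h0 i j))
  refine .of_submatrix_castSucc (hB.isHermitian.hadamard (hadPow_isHermitian hCpsd.isHermitian _))
    (fun i => by simp [hadamard_apply, B, P, ξ, hA.sub_vecMulVec_pivotCol_apply_self]) ?_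
  rw [submatrix_hadamard, ← hadPow_submatrix]
  exact (hB.submatrix _).hadamard (ih _ (hCpsd.submatrix _) fun i j => hC0 _ _)

theorem posSemidef_hadPow_fin_two {A : Matrix (Fin 2) (Fin 2) ℝ} (hA : A.PosSemidef)
    (h0 : ∀ i j, 0 ≤ A i j) {t : ℝ} (ht : 0 ≤ t) : (hadPow A t).PosSemidef := by
  refine posSemidef_fin_two_of_det_nonneg (hadPow_isHermitian hA.isHermitian t)
    (Real.rpow_nonneg (h0 0 0) t) (Real.rpow_nonneg (h0 1 1) t) ?_
  have h10 : A 1 0 = A 0 1 := by simpa using hA.isHermitian.apply 0 1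
  rw [det_fin_two, sub_nonneg]
  simp only [hadPow, of_apply, h10]
  rw [← Real.mul_rpow (h0 0 0) (h0 1 1), ← Real.mul_rpow (h0 0 1) (h0 0 1)]
  exact Real.rpow_le_rpow (mul_self_nonneg _) (hA.apply_mul_apply_le 0 1) ht

theorem posSemidef_hadPow {n : ℕ} {A : Matrix (Fin n) (Fin n) ℝ} (hA : A.PosSemidef)
    (h0 : ∀ i j, 0 ≤ A i j) {t : ℝ} (ht0 : 0 ≤ t) (ht : (n : ℝ) - 2 ≤ t) :
    (hadPow A t).PosSemidef :=
  match n, A, hA, h0, ht with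
  | 0, A, _, _, _ => Subsingleton.elim (hadPow A t) 0 ▸ .zero
  | 1, A, _, h0, _ => by
    have hdiag : hadPow A t = diagonal fun _ => A 0 0 ^ t := by
      ext i j
      fin_cases i; fin_cases j; rfl
    exact hdiag ▸ .diagonal fun _ => Real.rpow_nonneg (h0 0 0) t
  | 2, _, hA, h0, _ => posSemidef_hadPow_fin_two hA h0 ht0
  | m + 3, _, hA, h0, ht => by
    push_cast at ht
    exact posSemidef_hadPow_succ (by linarith)
      (fun C hC hC0 => posSemidef_hadPow hC hC0 (by linarith) (by push_cast; linarith)) hA h0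

theorem posDef_hadPow {n : ℕ} {A : Matrix (Fin n) (Fin n) ℝ} (hA : A.PosDef)
    (h0 : ∀ i j, 0 ≤ A i j) {t : ℝ} (ht0 : 0 < t) (ht : (n : ℝ) - 2 ≤ t) :
    (hadPow A t).PosDef := by
  obtain ⟨ε, hε, hAε⟩ := hA.exists_pos_posSemidef_sub_smul_one
  set A' := A - ε • 1
  have hA'0 (i j) : 0 ≤ A' i j := by
    rcases eq_or_ne i j with rfl | hij
    · exact hAε.diag_nonneg
    · simp [A', hij, h0]
  have hsplit : hadPow A t = hadPow A' t + diagonal fun i => A i i ^ t - A' i i ^ t := by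
    ext i j
    rcases eq_or_ne i j with rfl | hij
    · simp [hadPow, A']
    · simp [hadPow, A', hij]
  rw [hsplit]
  refine .posSemidef_add (posSemidef_hadPow hAε hA'0 ht0.le ht) (.diagonal fun i => ?_)
  exact sub_pos.mpr (Real.rpow_lt_rpow (hA'0 i i) (by simp [A', hε]) ht0)

theorem hadamard_power_posSemidef_posDef_general {n : ℕ}
    (A : Matrix (Fin n) (Fin n) ℝ) (h0 : ∀ i j, 0 ≤ A i j)
    (t : ℝ) (ht0 : 0 < t) (ht : (n : ℝ) - 2 ≤ t) :
    (A.PosSemidef → (hadPow A t).PosSemidef) ∧ (A.PosDef → (hadPow A t).PosDef) :=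
  ⟨fun hA => posSemidef_hadPow hA h0 ht0.le ht, fun hA => posDef_hadPow hA h0 ht0 ht⟩

/-- FitzGerald–Horn, Theorem 5.4. Let `n ≥ 2` and let `A` be an
`n`-by-`n` symmetric positive semidefinite (resp. positive definite) real matrix with
nonnegative entries. Then for every real `t ≥ n - 2` (with `t > 0` when `n = 2`),
the Hadamard power `A^{∘t}` is positive semidefinite (resp. positive definite). -/
theorem hadamard_power_posSemidef_posDef {n : ℕ} (hn : 2 ≤ n)
    (A : Matrix (Fin n) (Fin n) ℝ) (h0 : ∀ i j, 0 ≤ A i j)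
    (t : ℝ) (ht0 : 0 < t) (ht : (n : ℝ) - 2 ≤ t) :
    (A.PosSemidef → (hadPow A t).PosSemidef) ∧ (A.PosDef → (hadPow A t).PosDef) :=
  hadamard_power_posSemidef_posDef_general A h0 t ht0 ht
end
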